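/- arXiv:2009.00866 — 7 statements merged into one kernel-verified Lean document; each statement's English description precedes it below -/
import Mathlib

section
/- Let E_λ be the erasure channel E_λ(ρ) := λρ ⊕ (1−λ)Tr[ρ]|φ⟩⟨φ| from L(H) to L(H ⊕ K), where 0 ≤ λ ≤ 1 and |φ⟩ ∈ K is a unit vector. Then for any game g, U(E_λ, g) = λ·U(id, g) + (1−λ)·max_y Σ_x g_{x,y}, where id is the identity channel on L(H). -/
open Matrix Kronecker
open scoped ComplexOrder

noncomputable section

variable {n : Type*} [Fintype n] [DecidableEq n]

/-- A density operator: positive semidefinite with unit trace. -/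
def IsDensity (ρ : Matrix n n ℂ) : Prop := ρ.PosSemidef ∧ ρ.trace = 1

/-- A POVM: positive semidefinite effects summing to the identity. -/
def IsPOVM {m : ℕ} (π : Fin m → Matrix n n ℂ) : Prop :=
  (∀ y, (π y).PosSemidef) ∧ ∑ y, π y = 1

/-- The Choi matrix of a map on matrices. -/
def choi {p q : Type*} [Fintype p] [DecidableEq p] [Fintype q] [DecidableEq q]
    (Φ : Matrix p p ℂ → Matrix q q ℂ) : Matrix (p × q) (p × q) ℂ :=
  ∑ i, ∑ j, (Matrix.single i j (1 : ℂ)) ⊗ₖ (Φ (Matrix.single i j (1 : ℂ)))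

/-- Completely positive trace preserving linear map. -/
def IsCPTP {p q : Type*} [Fintype p] [DecidableEq p] [Fintype q] [DecidableEq q]
    (Φ : Matrix p p ℂ → Matrix q q ℂ) : Prop :=
  IsLinearMap ℂ Φ ∧ (choi Φ).PosSemidef ∧ ∀ ρ, (Φ ρ).trace = ρ.trace

/-- The average payoff of game `g`, channel `Φ`, encoding `ρ`, decoding `π`. -/
def payoff {p q : Type*} [Fintype p] [DecidableEq p] [Fintype q] [DecidableEq q]
    {nn m : ℕ} (g : Fin nn → Fin m → ℝ) (Φ : Matrix p p ℂ → Matrix q q ℂ)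
    (ρ : Fin nn → Matrix p p ℂ) (π : Fin m → Matrix q q ℂ) : ℝ :=
  ∑ x, ∑ y, ((Φ (ρ x) * π y).trace).re * g x y

/-- The communication utility of channel `Φ` for game `g`. -/
def utility {p q : Type*} [Fintype p] [DecidableEq p] [Fintype q] [DecidableEq q]
    {nn m : ℕ} (g : Fin nn → Fin m → ℝ) (Φ : Matrix p p ℂ → Matrix q q ℂ) : ℝ :=
  sSup {u : ℝ | ∃ ρ π, (∀ x, IsDensity (ρ x)) ∧ IsPOVM π ∧ u = payoff g Φ ρ π}

/-- The trace norm (sum of singular values). -/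
def traceNorm (A : Matrix n n ℂ) : ℝ :=
  ∑ i, Real.sqrt ((Matrix.posSemidef_conjTranspose_mul_self A).1.eigenvalues i)

/-- Helstrom utility of a channel for the binary discrimination game diag(g₀, 1-g₀). -/
def helstromUtility {p q : Type*} [Fintype p] [DecidableEq p] [Fintype q] [DecidableEq q]
    (Φ : Matrix p p ℂ → Matrix q q ℂ) (g₀ : ℝ) : ℝ :=
  sSup {u : ℝ | ∃ ρ₀ ρ₁, IsDensity ρ₀ ∧ IsDensity ρ₁ ∧
    u = (1 + traceNorm ((g₀ : ℂ) • Φ ρ₀ - ((1 - g₀ : ℝ) : ℂ) • Φ ρ₁)) / 2}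

/-!
The erasure channel is block diagonal, so against a decoding POVM `π` it only sees the diagonal
blocks of each effect: the `H`-block sees `λ ρ_x`, and the `K`-block sees the fixed flag state
`(1 - λ) σ` independently of the message `x`. The `H`-blocks form a POVM for the identity channel,
and the `K`-blocks turn `σ` into a probability distribution on the guesses `y`, which can earn at
most `max_y Σ_x g x y`. Conversely, completing an optimal decoding for the identity channel by the
deterministic guess of a maximising `y` on `K` attains the bound.
-/

namespace Matrix

variable {d e : Type*} [Fintype d] [Fintype e]

lemma trace_fromBlocks (A : Matrix d d ℂ) (B : Matrix d e ℂ) (C : Matrix e d ℂ)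
    (D : Matrix e e ℂ) : (fromBlocks A B C D).trace = A.trace + D.trace := by
  simp [trace, Fintype.sum_sum_type]

namespace PosSemidef

open scoped MatrixOrder

variable [DecidableEq d] [DecidableEq e]

lemma trace_mul_nonneg {A B : Matrix d d ℂ} (hA : A.PosSemidef) (hB : B.PosSemidef) :
    0 ≤ (A * B).trace := by
  obtain ⟨P, rfl⟩ := CStarAlgebra.nonneg_iff_eq_star_mul_self.mp hA.nonneg
  rw [star_eq_conjTranspose, Matrix.mul_assoc, trace_mul_comm]
  exact (hB.mul_mul_conjTranspose_same P).trace_nonneg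

lemma re_trace_mul_nonneg {A B : Matrix d d ℂ} (hA : A.PosSemidef) (hB : B.PosSemidef) :
    0 ≤ (A * B).trace.re :=
  (RCLike.nonneg_iff.mp (hA.trace_mul_nonneg hB)).1

lemma fromBlocks_zero {A : Matrix d d ℂ} {D : Matrix e e ℂ} (hA : A.PosSemidef)
    (hD : D.PosSemidef) : (fromBlocks A 0 0 D).PosSemidef := by
  obtain ⟨P, rfl⟩ := CStarAlgebra.nonneg_iff_eq_star_mul_self.mp hA.nonneg
  obtain ⟨R, rfl⟩ := CStarAlgebra.nonneg_iff_eq_star_mul_self.mp hD.nonneg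
  convert posSemidef_conjTranspose_mul_self (fromBlocks P 0 0 R) using 1
  simp [fromBlocks_conjTranspose, fromBlocks_multiply, star_eq_conjTranspose]

end PosSemidef

end Matrix

section POVM

variable {d e : Type*} [DecidableEq d] [DecidableEq e] {m : ℕ}

lemma isPOVM_pi_single (y₀ : Fin m) : IsPOVM (Pi.single y₀ (1 : Matrix d d ℂ)) := by
  refine ⟨fun y => ?_, by simp [Finset.sum_pi_single']⟩
  rcases eq_or_ne y y₀ with rfl | hy
  · simpa using PosSemidef.one
  · simpa [hy] using PosSemidef.zero

lemma IsPOVM.fromBlocks [Fintype d] [Fintype e] {π : Fin m → Matrix d d ℂ}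
    {π' : Fin m → Matrix e e ℂ} (hπ : IsPOVM π) (hπ' : IsPOVM π') :
    IsPOVM fun y => fromBlocks (π y) 0 0 (π' y) := by
  refine ⟨fun y => (hπ.1 y).fromBlocks_zero (hπ'.1 y), ?_⟩
  rw [← fromBlocks_one, ← hπ.2, ← hπ'.2]
  ext (i | i) (j | j) <;> simp [Matrix.sum_apply]

variable {π : Fin m → Matrix (d ⊕ e) (d ⊕ e) ℂ}

lemma IsPOVM.toBlocks₁₁ (hπ : IsPOVM π) : IsPOVM fun y => (π y).toBlocks₁₁ := by
  refine ⟨fun y => (hπ.1 y).submatrix Sum.inl, ?_⟩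
  ext i j
  simpa [Matrix.sum_apply, one_apply, Matrix.toBlocks₁₁] using
    congr_fun₂ hπ.2 (Sum.inl i) (Sum.inl j)

lemma IsPOVM.toBlocks₂₂ (hπ : IsPOVM π) : IsPOVM fun y => (π y).toBlocks₂₂ := by
  refine ⟨fun y => (hπ.1 y).submatrix Sum.inr, ?_⟩
  ext i j
  simpa [Matrix.sum_apply, one_apply, Matrix.toBlocks₂₂] using
    congr_fun₂ hπ.2 (Sum.inr i) (Sum.inr j)

lemma IsPOVM.sum_re_trace_mul [Fintype d] {π : Fin m → Matrix d d ℂ} (hπ : IsPOVM π)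
    {σ : Matrix d d ℂ} (hσ : σ.trace = 1) : ∑ y, (σ * π y).trace.re = 1 := by
  rw [← Complex.re_sum, ← trace_sum, ← Finset.mul_sum, hπ.2, Matrix.mul_one, hσ, Complex.one_re]

end POVM

lemma sum_mul_le_ciSup {ι : Type*} [Fintype ι] {p f : ι → ℝ} (hp : ∀ i, 0 ≤ p i)
    (hp₁ : ∑ i, p i = 1) : ∑ i, p i * f i ≤ ⨆ i, f i :=
  calc ∑ i, p i * f i ≤ ∑ i, p i * ⨆ i, f i := by
        gcongr with i
        · exact hp i
        · exact le_ciSup (Set.finite_range f).bddAbove i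
    _ = ⨆ i, f i := by rw [← Finset.sum_mul, hp₁, one_mul]

lemma mul_csSup_add_le {s : Set ℝ} (hs : s.Nonempty) {l c b : ℝ} (hl : 0 ≤ l)
    (h : ∀ u ∈ s, l * u + c ≤ b) : l * sSup s + c ≤ b := by
  rw [← smul_eq_mul, ← Real.sSup_smul_of_nonneg hl, ← le_sub_iff_add_le]
  refine csSup_le hs.smul_set ?_
  rintro _ ⟨u, hu, rfl⟩
  exact le_sub_iff_add_le.mpr (h u hu)

section Utility

variable {p q : Type*} [Fintype p] [DecidableEq p] [Fintype q] [DecidableEq q] {nn m : ℕ}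
  (g : Fin nn → Fin m → ℝ) (Φ : Matrix p p ℂ → Matrix q q ℂ)

def payoffSet : Set ℝ :=
  {u | ∃ ρ π, (∀ x, IsDensity (ρ x)) ∧ IsPOVM π ∧ u = payoff g Φ ρ π}

lemma payoffSet_nonempty [Nonempty p] (hm : 0 < m) : (payoffSet g Φ).Nonempty := by
  have : Nonempty (Fin m) := Fin.pos_iff_nonempty.mp hm
  refine ⟨_, fun _ => diagonal (Pi.single (Classical.arbitrary p) 1),
    Pi.single (Classical.arbitrary _) 1,
    fun _ => ⟨.diagonal ?_, by simp [Finset.sum_pi_single']⟩, isPOVM_pi_single _, rfl⟩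
  simp

variable {g Φ}

lemma payoff_le_sum_ciSup (hΦ : ∀ ρ, IsDensity ρ → IsDensity (Φ ρ))
    {ρ : Fin nn → Matrix p p ℂ} (hρ : ∀ x, IsDensity (ρ x)) {π : Fin m → Matrix q q ℂ}
    (hπ : IsPOVM π) : payoff g Φ ρ π ≤ ∑ x, ⨆ y, g x y := by
  refine Finset.sum_le_sum fun x _ => sum_mul_le_ciSup (fun y => ?_) ?_
  · exact (hΦ _ (hρ x)).1.re_trace_mul_nonneg (hπ.1 y)
  · exact hπ.sum_re_trace_mul (hΦ _ (hρ x)).2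

lemma payoff_le_utility (hΦ : ∀ ρ, IsDensity ρ → IsDensity (Φ ρ))
    {ρ : Fin nn → Matrix p p ℂ} (hρ : ∀ x, IsDensity (ρ x)) {π : Fin m → Matrix q q ℂ}
    (hπ : IsPOVM π) : payoff g Φ ρ π ≤ utility g Φ := by
  refine le_csSup ⟨∑ x, ⨆ y, g x y, ?_⟩ ⟨ρ, π, hρ, hπ, rfl⟩
  rintro _ ⟨ρ', π', hρ', hπ', rfl⟩
  exact payoff_le_sum_ciSup hΦ hρ' hπ'

variable [Nonempty p]

lemma utility_le (hm : 0 < m) {b : ℝ}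
    (h : ∀ ρ π, (∀ x, IsDensity (ρ x)) → IsPOVM π → payoff g Φ ρ π ≤ b) :
    utility g Φ ≤ b := by
  refine csSup_le (payoffSet_nonempty g Φ hm) ?_
  rintro _ ⟨ρ, π, hρ, hπ, rfl⟩
  exact h ρ π hρ hπ

lemma mul_utility_add_le (hm : 0 < m) {l c b : ℝ} (hl : 0 ≤ l)
    (h : ∀ ρ π, (∀ x, IsDensity (ρ x)) → IsPOVM π → l * payoff g Φ ρ π + c ≤ b) :
    l * utility g Φ + c ≤ b := by
  refine mul_csSup_add_le (payoffSet_nonempty g Φ hm) hl ?_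
  rintro _ ⟨ρ, π, hρ, hπ, rfl⟩
  exact h ρ π hρ hπ

end Utility

section Erasure

variable {d e : Type*} [Fintype d] [DecidableEq d] [Fintype e] [DecidableEq e]

def erasure (l : ℝ) (σ : Matrix e e ℂ) (ρ : Matrix d d ℂ) : Matrix (d ⊕ e) (d ⊕ e) ℂ :=
  fromBlocks ((l : ℂ) • ρ) 0 0 ((((1 - l : ℝ) : ℂ) * ρ.trace) • σ)

variable {l : ℝ} {σ : Matrix e e ℂ}

lemma isDensity_erasure (hl₀ : 0 ≤ l) (hl₁ : l ≤ 1) (hσ : IsDensity σ) {ρ : Matrix d d ℂ}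
    (hρ : IsDensity ρ) : IsDensity (erasure l σ ρ) := by
  rw [erasure, hρ.2, mul_one]
  refine ⟨(hρ.1.smul (Complex.zero_le_real.mpr hl₀)).fromBlocks_zero
    (hσ.1.smul (Complex.zero_le_real.mpr (sub_nonneg.mpr hl₁))), ?_⟩
  rw [trace_fromBlocks, trace_smul, trace_smul, hρ.2, hσ.2]
  simp

lemma re_trace_erasure_mul {ρ : Matrix d d ℂ} (hρ : ρ.trace = 1)
    (M : Matrix (d ⊕ e) (d ⊕ e) ℂ) :
    (erasure l σ ρ * M).trace.re
      = l * (ρ * M.toBlocks₁₁).trace.re + (1 - l) * (σ * M.toBlocks₂₂).trace.re := by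
  conv_lhs => rw [erasure, hρ, mul_one, ← fromBlocks_toBlocks M, fromBlocks_multiply]
  simp [trace_fromBlocks]

lemma payoff_erasure {nn m : ℕ} (g : Fin nn → Fin m → ℝ) {ρ : Fin nn → Matrix d d ℂ}
    (hρ : ∀ x, (ρ x).trace = 1) (π : Fin m → Matrix (d ⊕ e) (d ⊕ e) ℂ) :
    payoff g (erasure l σ) ρ π
      = l * payoff g id ρ (fun y => (π y).toBlocks₁₁)
        + (1 - l) * ∑ y, (σ * (π y).toBlocks₂₂).trace.re * ∑ x, g x y := by
  simp only [payoff, re_trace_erasure_mul (hρ _), id, add_mul, Finset.sum_add_distrib,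
    Finset.mul_sum, mul_assoc]
  rw [Finset.sum_comm (f := fun x y => (1 - l) * _)]

theorem utility_erasure [Nonempty d] {nn m : ℕ} (hm : 0 < m) (g : Fin nn → Fin m → ℝ)
    (hl₀ : 0 ≤ l) (hl₁ : l ≤ 1) (hσ : IsDensity σ) :
    utility g (erasure l σ : Matrix d d ℂ → _)
      = l * utility g (id : Matrix d d ℂ → Matrix d d ℂ) + (1 - l) * ⨆ y, ∑ x, g x y := by
  have hE (ρ : Matrix d d ℂ) : IsDensity ρ → IsDensity (erasure l σ ρ) :=
    isDensity_erasure hl₀ hl₁ hσ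
  apply le_antisymm
  · refine utility_le hm fun ρ π hρ hπ => ?_
    rw [payoff_erasure g (fun x => (hρ x).2)]
    gcongr
    · exact payoff_le_utility (fun _ h => h) hρ hπ.toBlocks₁₁
    · exact sum_mul_le_ciSup (fun y => hσ.1.re_trace_mul_nonneg (hπ.toBlocks₂₂.1 y))
        (hπ.toBlocks₂₂.sum_re_trace_mul hσ.2)
  · have : Nonempty (Fin m) := Fin.pos_iff_nonempty.mp hm
    obtain ⟨y₀, hy₀⟩ := exists_eq_ciSup_of_finite (f := fun y => ∑ x, g x y)
    rw [← hy₀]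
    refine mul_utility_add_le hm hl₀ fun ρ π hρ hπ => ?_
    have hπ' := hπ.fromBlocks (isPOVM_pi_single (d := e) y₀)
    convert payoff_le_utility hE hρ hπ' using 1
    rw [payoff_erasure g (fun x => (hρ x).2)]
    simp [Pi.single_apply, apply_ite trace, apply_ite Complex.re, hσ.2]

end Erasure

/-- utility of the erasure channel. -/
theorem stmt3 {dH dK nn m : ℕ} (hdH : 0 < dH) (hm : 0 < m)
    (l : ℝ) (hl0 : 0 ≤ l) (hl1 : l ≤ 1)
    (φ : Fin dK → ℂ) (hφ : star φ ⬝ᵥ φ = 1)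
    (E : Matrix (Fin dH) (Fin dH) ℂ → Matrix (Fin dH ⊕ Fin dK) (Fin dH ⊕ Fin dK) ℂ)
    (hE : ∀ ρ, E ρ = Matrix.fromBlocks ((l : ℂ) • ρ) 0 0
      ((((1 - l : ℝ) : ℂ) * ρ.trace) • Matrix.vecMulVec φ (star φ)))
    (g : Fin nn → Fin m → ℝ) :
    utility g E
      = l * utility g (id : Matrix (Fin dH) (Fin dH) ℂ → Matrix (Fin dH) (Fin dH) ℂ)
        + (1 - l) * ⨆ y, ∑ x, g x y := by
  have : Nonempty (Fin dH) := Fin.pos_iff_nonempty.mp hdH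
  obtain rfl : E = erasure l (vecMulVec φ (star φ)) := funext hE
  refine utility_erasure hm g hl0 hl1 ⟨posSemidef_vecMulVec_self_star φ, ?_⟩
  rw [trace_vecMulVec, dotProduct_comm, hφ]

end
end

section
/- Let P_λ⃗ be the Pauli channel P_λ⃗(ρ) = λ_0 ρ + Σ_{k=1}^3 λ_k σ_k ρ σ_k on qubits, where λ⃗ is a probability vector and σ_1, σ_2, σ_3 are the Pauli matrices. For any binary discrimination game g = diag(g_0, 1−g_0) with 1/2 ≤ g_0 ≤ 1, U(P_λ⃗, g) = max( g_0, (1 + max_{k∈{1,2,3}} |2(λ_0 + λ_k) − 1|)/2 ). -/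
open Matrix Kronecker
open scoped ComplexOrder

noncomputable section

variable {n : Type*} [Fintype n] [DecidableEq n]

/-! Every qubit state is `blochMatrix (1 / 2) r` with `‖r‖ ≤ 1 / 2`, and the Pauli channel fixes the
scalar part while multiplying the `k`-th Bloch coordinate by `λ₀ + λₖ - λᵢ - λⱼ = 2 (λ₀ + λₖ) - 1`.
So `g₀ P ρ₀ - (1 - g₀) P ρ₁` is a Bloch matrix with scalar part `g₀ - 1 / 2` and vector
`D (g₀ r₀ - (1 - g₀) r₁)`, `D` diagonal; its trace norm is `2 max (g₀ - 1 / 2) ‖D (⋯)‖`. The vector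
`g₀ r₀ - (1 - g₀) r₁` lies in the ball of radius `1 / 2`, so `‖D (⋯)‖ ≤ maxₖ |2 (λ₀ + λₖ) - 1| / 2`,
with equality for antipodal pure states along the best axis. -/

namespace Matrix.IsHermitian

variable {A : Matrix (Fin 2) (Fin 2) ℂ}

lemma re_trace_fin_two (hA : A.IsHermitian) :
    A.trace.re = hA.eigenvalues 0 + hA.eigenvalues 1 := by
  simp [hA.trace_eq_sum_eigenvalues, Fin.sum_univ_two]

lemma re_det_fin_two (hA : A.IsHermitian) : A.det.re = hA.eigenvalues 0 * hA.eigenvalues 1 := by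
  simp [hA.det_eq_prod_eigenvalues, Fin.prod_univ_two]

lemma posSemidef_iff_fin_two (hA : A.IsHermitian) :
    A.PosSemidef ↔ 0 ≤ A.trace.re ∧ 0 ≤ A.det.re := by
  rw [hA.posSemidef_iff_eigenvalues_nonneg, Pi.le_def, Fin.forall_fin_two, Pi.zero_apply,
    Pi.zero_apply, hA.re_trace_fin_two, hA.re_det_fin_two]
  refine ⟨fun ⟨h₀, h₁⟩ ↦ ⟨add_nonneg h₀ h₁, mul_nonneg h₀ h₁⟩, fun ⟨hs, hp⟩ ↦ ?_⟩
  constructor <;> nlinarith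

end Matrix.IsHermitian

lemma traceNorm_fin_two (A : Matrix (Fin 2) (Fin 2) ℂ) :
    traceNorm A = √((Aᴴ * A).trace.re + 2 * √((Aᴴ * A).det.re)) := by
  have hB := posSemidef_conjTranspose_mul_self A
  have h₀ := hB.eigenvalues_nonneg 0
  have h₁ := hB.eigenvalues_nonneg 1
  rw [traceNorm, Fin.sum_univ_two, hB.1.re_trace_fin_two, hB.1.re_det_fin_two, Real.sqrt_mul h₀,
    ← Real.sqrt_sq (add_nonneg (Real.sqrt_nonneg _) (Real.sqrt_nonneg _)), add_sq,
    Real.sq_sqrt h₀, Real.sq_sqrt h₁]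
  ring_nf

lemma sqrt_two_mul_add_add_abs_sub {x y : ℝ} (hx : 0 ≤ x) (hy : 0 ≤ y) :
    √(2 * (x ^ 2 + y ^ 2) + 2 * |x ^ 2 - y ^ 2|) = 2 * max x y := by
  rcases le_total x y with h | h
  · rw [abs_of_nonpos (by nlinarith), max_eq_right h, ← Real.sqrt_sq (by positivity : 0 ≤ 2 * y)]
    ring_nf
  · rw [abs_of_nonneg (by nlinarith), max_eq_left h, ← Real.sqrt_sq (by positivity : 0 ≤ 2 * x)]
    ring_nf

/-- The matrix `a • 1 + r 0 • σ₁ + r 1 • σ₂ + r 2 • σ₃`. -/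
def blochMatrix (a : ℝ) (r : EuclideanSpace ℝ (Fin 3)) : Matrix (Fin 2) (Fin 2) ℂ :=
  !![((a + r 2 : ℝ) : ℂ), (r 0 : ℂ) - (r 1 : ℂ) * Complex.I;
     (r 0 : ℂ) + (r 1 : ℂ) * Complex.I, ((a - r 2 : ℝ) : ℂ)]

section Bloch

variable (a b : ℝ) (r s : EuclideanSpace ℝ (Fin 3))

lemma blochMatrix_isHermitian : (blochMatrix a r).IsHermitian := by
  ext i j
  fin_cases i <;> fin_cases j <;> simp [blochMatrix, Complex.ext_iff]

lemma blochMatrix_sub :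
    blochMatrix a r - blochMatrix b s = blochMatrix (a - b) (r - s) := by
  ext i j
  fin_cases i <;> fin_cases j <;> simp [blochMatrix] <;> ring

lemma ofReal_smul_blochMatrix (t : ℝ) :
    (t : ℂ) • blochMatrix a r = blochMatrix (t * a) (t • r) := by
  ext i j
  fin_cases i <;> fin_cases j <;> simp [blochMatrix] <;> ring

lemma EuclideanSpace.real_norm_sq_eq_fin_three : ‖r‖ ^ 2 = r 0 ^ 2 + r 1 ^ 2 + r 2 ^ 2 := by
  rw [EuclideanSpace.real_norm_sq_eq, Fin.sum_univ_three]

lemma trace_blochMatrix : (blochMatrix a r).trace = ((2 * a : ℝ) : ℂ) := by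
  simp [blochMatrix, trace_fin_two]
  ring

lemma det_blochMatrix : (blochMatrix a r).det = ((a ^ 2 - ‖r‖ ^ 2 : ℝ) : ℂ) := by
  rw [EuclideanSpace.real_norm_sq_eq_fin_three]
  simp only [blochMatrix, det_fin_two_of]
  push_cast
  linear_combination (r 1 : ℂ) ^ 2 * Complex.I_sq

lemma trace_blochMatrix_mul_self :
    (blochMatrix a r * blochMatrix a r).trace = ((2 * (a ^ 2 + ‖r‖ ^ 2) : ℝ) : ℂ) := by
  rw [EuclideanSpace.real_norm_sq_eq_fin_three]
  simp only [blochMatrix, mul_fin_two, trace_fin_two_of]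
  push_cast
  linear_combination -2 * (r 1 : ℂ) ^ 2 * Complex.I_sq

lemma traceNorm_blochMatrix : traceNorm (blochMatrix a r) = 2 * max |a| ‖r‖ := by
  rw [traceNorm_fin_two, (blochMatrix_isHermitian a r).eq, trace_blochMatrix_mul_self, det_mul,
    det_blochMatrix, ← Complex.ofReal_mul, Complex.ofReal_re, Complex.ofReal_re, ← sq,
    Real.sqrt_sq_eq_abs, ← sq_abs a, sqrt_two_mul_add_add_abs_sub (abs_nonneg a) (norm_nonneg r)]

lemma isDensity_blochMatrix_iff : IsDensity (blochMatrix a r) ↔ a = 1 / 2 ∧ ‖r‖ ≤ 1 / 2 := by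
  rw [IsDensity, (blochMatrix_isHermitian a r).posSemidef_iff_fin_two, trace_blochMatrix,
    det_blochMatrix, Complex.ofReal_re, Complex.ofReal_re, ← Complex.ofReal_one,
    Complex.ofReal_inj]
  have := norm_nonneg r
  constructor
  · rintro ⟨⟨-, hdet⟩, htr⟩
    constructor <;> nlinarith
  · rintro ⟨rfl, hr⟩
    exact ⟨⟨by norm_num, by nlinarith⟩, by norm_num⟩

end Bloch

lemma Matrix.IsHermitian.exists_eq_blochMatrix {A : Matrix (Fin 2) (Fin 2) ℂ}
    (hA : A.IsHermitian) :
    ∃ a r, A = blochMatrix a r := by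
  have h₀₀ := congrFun (congrFun hA 0) 0
  have h₁₁ := congrFun (congrFun hA 1) 1
  have h₀₁ := congrFun (congrFun hA 0) 1
  simp only [conjTranspose_apply, Complex.star_def] at h₀₀ h₁₁ h₀₁
  rw [Complex.conj_eq_iff_im] at h₀₀ h₁₁
  refine ⟨((A 0 0).re + (A 1 1).re) / 2,
    !₂[(A 1 0).re, (A 1 0).im, ((A 0 0).re - (A 1 1).re) / 2], ?_⟩
  ext i j
  fin_cases i <;> fin_cases j <;> simp [blochMatrix, Complex.ext_iff, ← h₀₁, h₀₀, h₁₁] <;> ring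

lemma IsDensity.exists_eq_blochMatrix {ρ : Matrix (Fin 2) (Fin 2) ℂ} (hρ : IsDensity ρ) :
    ∃ r : EuclideanSpace ℝ (Fin 3), ‖r‖ ≤ 1 / 2 ∧ ρ = blochMatrix (1 / 2) r := by
  obtain ⟨a, r, rfl⟩ := hρ.1.1.exists_eq_blochMatrix
  obtain ⟨rfl, hr⟩ := (isDensity_blochMatrix_iff a r).1 hρ
  exact ⟨r, hr, rfl⟩

namespace Matrix

variable {ι : Type*} [Fintype ι] [DecidableEq ι] (c : ι → ℝ)

lemma toLpLin_diagonal_apply (r : EuclideanSpace ℝ ι) (i : ι) :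
    toLpLin 2 2 (diagonal c) r i = c i * r i := by
  simp [toLpLin_apply, mulVec_diagonal]

lemma toLpLin_diagonal_single (i : ι) (t : ℝ) :
    toLpLin 2 2 (diagonal c) (EuclideanSpace.single i t) = EuclideanSpace.single i (c i * t) := by
  ext j
  rw [toLpLin_diagonal_apply]
  by_cases h : j = i <;> simp [h]

lemma norm_toLpLin_diagonal_le {M : ℝ} (hc : ∀ i, |c i| ≤ M) (r : EuclideanSpace ℝ ι) :
    ‖toLpLin 2 2 (diagonal c) r‖ ≤ M * ‖r‖ := by
  rcases isEmpty_or_nonempty ι with hι | ⟨⟨i⟩⟩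
  · simp [Subsingleton.elim r 0]
  have hM : 0 ≤ M := (abs_nonneg _).trans (hc i)
  rw [← pow_le_pow_iff_left₀ (norm_nonneg _) (by positivity) two_ne_zero, mul_pow,
    EuclideanSpace.real_norm_sq_eq, EuclideanSpace.real_norm_sq_eq, Finset.mul_sum]
  gcongr with j
  rw [toLpLin_diagonal_apply, mul_pow]
  exact mul_le_mul_of_nonneg_right (sq_le_sq' (neg_le_of_abs_le (hc j)) (le_of_abs_le (hc j)))
    (sq_nonneg _)

end Matrix

def pauliChannel (l : Fin 4 → ℝ) (ρ : Matrix (Fin 2) (Fin 2) ℂ) : Matrix (Fin 2) (Fin 2) ℂ :=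
  (l 0 : ℂ) • ρ
    + (l 1 : ℂ) • (!![0, 1; 1, 0] * ρ * !![0, 1; 1, 0])
    + (l 2 : ℂ) • (!![0, -Complex.I; Complex.I, 0] * ρ * !![0, -Complex.I; Complex.I, 0])
    + (l 3 : ℂ) • (!![1, 0; 0, -1] * ρ * !![1, 0; 0, -1])

def pauliFactor (l : Fin 4 → ℝ) (k : Fin 3) : ℝ := 2 * (l 0 + l k.succ) - 1

lemma pauliChannel_blochMatrix {l : Fin 4 → ℝ} (hl : ∑ k, l k = 1) (a : ℝ)
    (r : EuclideanSpace ℝ (Fin 3)) :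
    pauliChannel l (blochMatrix a r) = blochMatrix a (toLpLin 2 2 (diagonal (pauliFactor l)) r) := by
  have hl₀ : l 0 = 1 - l 1 - l 2 - l 3 := by rw [Fin.sum_univ_four] at hl; linarith
  ext i j
  fin_cases i <;> fin_cases j <;>
    simp [pauliChannel, blochMatrix, toLpLin_diagonal_apply, pauliFactor, Complex.ext_iff, hl₀] <;>
    (try constructor) <;> ring

lemma isGreatest_abs_pauliFactor (l : Fin 4 → ℝ) :
    IsGreatest (Set.range fun k ↦ |pauliFactor l k|)
      (max |2 * (l 0 + l 1) - 1| (max |2 * (l 0 + l 2) - 1| |2 * (l 0 + l 3) - 1|)) := by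
  refine ⟨?_, ?_⟩
  · rcases max_choice |2 * (l 0 + l 1) - 1| (max |2 * (l 0 + l 2) - 1| |2 * (l 0 + l 3) - 1|)
      with h | h
    · exact ⟨0, h.symm⟩
    rcases max_choice |2 * (l 0 + l 2) - 1| |2 * (l 0 + l 3) - 1| with h' | h'
    · exact ⟨1, (h.trans h').symm⟩
    · exact ⟨2, (h.trans h').symm⟩
  · rintro _ ⟨k, rfl⟩
    fin_cases k <;> simp [pauliFactor]

lemma norm_smul_sub_smul_le {E : Type*} [SeminormedAddCommGroup E] [NormedSpace ℝ E] {u v : E}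
    {R t : ℝ} (hu : ‖u‖ ≤ R) (hv : ‖v‖ ≤ R) (ht₀ : 0 ≤ t) (ht₁ : t ≤ 1) :
    ‖t • u - (1 - t) • v‖ ≤ R :=
  calc ‖t • u - (1 - t) • v‖ ≤ t * ‖u‖ + (1 - t) * ‖v‖ := by
        refine (norm_sub_le _ _).trans_eq ?_
        rw [norm_smul, norm_smul, Real.norm_of_nonneg ht₀, Real.norm_of_nonneg (sub_nonneg.2 ht₁)]
    _ ≤ t * R + (1 - t) * R := by gcongr
    _ = R := by ring

lemma helstrom_pauliChannel_blochMatrix {l : Fin 4 → ℝ} (hl : ∑ k, l k = 1) {g : ℝ}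
    (hg : 1 / 2 ≤ g) (u v : EuclideanSpace ℝ (Fin 3)) :
    (1 + traceNorm ((g : ℂ) • pauliChannel l (blochMatrix (1 / 2) u)
        - ((1 - g : ℝ) : ℂ) • pauliChannel l (blochMatrix (1 / 2) v))) / 2
      = max g ((1 + 2 * ‖toLpLin 2 2 (diagonal (pauliFactor l)) (g • u - (1 - g) • v)‖) / 2) := by
  rw [pauliChannel_blochMatrix hl, pauliChannel_blochMatrix hl, ofReal_smul_blochMatrix,
    ofReal_smul_blochMatrix, blochMatrix_sub, traceNorm_blochMatrix, map_sub, map_smul, map_smul,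
    show g * (1 / 2) - (1 - g) * (1 / 2) = g - 1 / 2 by ring, abs_of_nonneg (by linarith)]
  set n := ‖g • toLpLin 2 2 (diagonal (pauliFactor l)) u
    - (1 - g) • toLpLin 2 2 (diagonal (pauliFactor l)) v‖
  rcases le_total (g - 1 / 2) n with h | h
  · rw [max_eq_right h, max_eq_right (by linarith)]
  · rw [max_eq_left h, max_eq_left (by linarith)]
    ring

theorem stmt10_general (l : Fin 4 → ℝ) (hsum : ∑ k, l k = 1)
    (g₀ : ℝ) (hg0 : 1 / 2 ≤ g₀) (hg1 : g₀ ≤ 1)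
    (P : Matrix (Fin 2) (Fin 2) ℂ → Matrix (Fin 2) (Fin 2) ℂ)
    (hP : ∀ ρ, P ρ = (l 0 : ℂ) • ρ
      + (l 1 : ℂ) • (!![0, 1; 1, 0] * ρ * !![0, 1; 1, 0])
      + (l 2 : ℂ) • (!![0, -Complex.I; Complex.I, 0] * ρ * !![0, -Complex.I; Complex.I, 0])
      + (l 3 : ℂ) • (!![1, 0; 0, -1] * ρ * !![1, 0; 0, -1])) :
    helstromUtility P g₀
      = max g₀ ((1 + max |2 * (l 0 + l 1) - 1|
          (max |2 * (l 0 + l 2) - 1| |2 * (l 0 + l 3) - 1|)) / 2) := by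
  obtain rfl : P = pauliChannel l := funext hP
  obtain ⟨⟨k, hk : |pauliFactor l k| = _⟩, hm⟩ := isGreatest_abs_pauliFactor l
  refine IsGreatest.csSup_eq ⟨?_, ?_⟩
  · set u := EuclideanSpace.single k (1 / 2 : ℝ)
    have hu : ‖u‖ = 1 / 2 := by simp [u]
    refine ⟨blochMatrix (1 / 2) u, blochMatrix (1 / 2) (-u),
      (isDensity_blochMatrix_iff _ _).2 ⟨rfl, hu.le⟩,
      (isDensity_blochMatrix_iff _ _).2 ⟨rfl, (norm_neg u).trans_le hu.le⟩, ?_⟩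
    rw [helstrom_pauliChannel_blochMatrix hsum hg0, show g₀ • u - (1 - g₀) • -u = u by module,
      toLpLin_diagonal_single, PiLp.norm_single, Real.norm_eq_abs, abs_mul, hk,
      abs_of_pos (one_half_pos : (0 : ℝ) < 1 / 2)]
    ring_nf
  · rintro _ ⟨ρ₀, ρ₁, h₀, h₁, rfl⟩
    obtain ⟨u, hu, rfl⟩ := h₀.exists_eq_blochMatrix
    obtain ⟨v, hv, rfl⟩ := h₁.exists_eq_blochMatrix
    rw [helstrom_pauliChannel_blochMatrix hsum hg0]
    have hw := norm_smul_sub_smul_le hu hv (by linarith) hg1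
    have hD := norm_toLpLin_diagonal_le _ (fun k ↦ hm ⟨k, rfl⟩) (g₀ • u - (1 - g₀) • v)
    have hm₀ := (abs_nonneg _).trans (hm ⟨0, rfl⟩)
    gcongr
    linarith [mul_le_mul_of_nonneg_left hw hm₀]

/-- binary discrimination utility of the Pauli channel. -/
theorem stmt10 (l : Fin 4 → ℝ) (hl : ∀ k, 0 ≤ l k) (hsum : ∑ k, l k = 1)
    (g₀ : ℝ) (hg0 : 1 / 2 ≤ g₀) (hg1 : g₀ ≤ 1)
    (P : Matrix (Fin 2) (Fin 2) ℂ → Matrix (Fin 2) (Fin 2) ℂ)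
    (hP : ∀ ρ, P ρ = (l 0 : ℂ) • ρ
      + (l 1 : ℂ) • (!![0, 1; 1, 0] * ρ * !![0, 1; 1, 0])
      + (l 2 : ℂ) • (!![0, -Complex.I; Complex.I, 0] * ρ * !![0, -Complex.I; Complex.I, 0])
      + (l 3 : ℂ) • (!![1, 0; 0, -1] * ρ * !![1, 0; 0, -1])) :
    helstromUtility P g₀
      = max g₀ ((1 + max |2 * (l 0 + l 1) - 1|
          (max |2 * (l 0 + l 2) - 1| |2 * (l 0 + l 3) - 1|)) / 2) :=
  stmt10_general l hsum g₀ hg0 hg1 P hP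

end
end

section
/- Let S_λ(ρ) := λρ + (1−λ)Tr[ρ]·σ be the shifted-depolarizing channel on a d-dimensional space, with 0 ≤ λ ≤ 1 and σ a fixed density operator with smallest eigenvalue s_{d−1}. For any binary discrimination game g = diag(g_0, 1−g_0) with 1/2 ≤ g_0 ≤ 1, U(S_λ, g) = max( g_0, (1 + λ + (1−λ)(1 − 2s_{d−1})(2g_0 − 1))/2 ). -/
open Matrix Kronecker
open scoped ComplexOrder

noncomputable section

variable {n : Type*} [Fintype n] [DecidableEq n]

/-! For densities ρ₀, ρ₁ the operator `X = g₀ S ρ₀ - (1 - g₀) S ρ₁` equals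
`l g₀ ρ₀ - a ρ₁ + c σ` with `a = l (1 - g₀)` and `c = (1 - l)(2 g₀ - 1) ≥ 0`; it is Hermitian of
trace `2 g₀ - 1`, so `‖X‖₁ = (2 g₀ - 1) + 2 ∑ λᵢ(X)⁻`. Since `σ ≥ s`, the matrix `X + a ρ₁ - c s`
is positive semidefinite, which bounds `λᵢ(X)⁻` by `max 0 (a - c s)` times the weight of `ρ₁` on
the `i`-th eigenvector of `X`, hence the sum by `max 0 (a - c s)`. Conversely, for any density `ρ`
the sum dominates `-tr (ρ X)`; taking for `ρ₁ = ρ` the eigenprojector of `σ` at `s` and for `ρ₀` an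
orthogonal eigenprojector gives `-tr (ρ₁ X) = a - c s`, so the bound is attained. -/

section

variable {m : Type*} [Fintype m] {ρ ρ₀ ρ₁ σ : Matrix m m ℂ} {α a c : ℝ}

lemma IsDensity.re_diag_nonneg (hρ : IsDensity ρ) (i : m) : 0 ≤ (ρ i i).re :=
  (Complex.nonneg_iff.mp hρ.1.diag_nonneg).1

lemma IsDensity.sum_re_diag (hρ : IsDensity ρ) : ∑ i, (ρ i i).re = 1 := by
  simpa [trace, Complex.re_sum] using congrArg Complex.re hρ.2

lemma IsDensity.re_diag_le_one (hρ : IsDensity ρ) (i : m) : (ρ i i).re ≤ 1 :=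
  hρ.sum_re_diag ▸ Finset.single_le_sum (fun j _ => hρ.re_diag_nonneg j) (Finset.mem_univ i)

lemma IsDensity.isHermitian_smul_sub_smul_add_smul (h₀ : IsDensity ρ₀) (h₁ : IsDensity ρ₁)
    (hσ : IsDensity σ) : (α • ρ₀ - a • ρ₁ + c • σ).IsHermitian :=
  ((h₀.1.1.smul (.all α)).sub (h₁.1.1.smul (.all a))).add (hσ.1.1.smul (.all c))

lemma IsDensity.re_trace_smul_sub_smul_add_smul (h₀ : IsDensity ρ₀) (h₁ : IsDensity ρ₁)
    (hσ : IsDensity σ) : (α • ρ₀ - a • ρ₁ + c • σ).trace.re = α - a + c := by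
  simp [trace_add, trace_sub, trace_smul, h₀.2, h₁.2, hσ.2]

lemma smul_sub_smul_shiftedDepolarizing_eq {l g₀ : ℝ}
    {S : Matrix m m ℂ → Matrix m m ℂ}
    (hS : ∀ ρ, S ρ = (l : ℂ) • ρ + (((1 - l : ℝ) : ℂ) * ρ.trace) • σ)
    (h₀ : IsDensity ρ₀) (h₁ : IsDensity ρ₁) :
    (g₀ : ℂ) • S ρ₀ - ((1 - g₀ : ℝ) : ℂ) • S ρ₁ =
      (l * g₀) • ρ₀ - (l * (1 - g₀)) • ρ₁ + ((1 - l) * (2 * g₀ - 1)) • σ := by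
  rw [hS, hS, h₀.2, h₁.2]
  simp only [← Complex.coe_smul]
  push_cast
  module

end

variable {A ρ : Matrix n n ℂ}

lemma IsDensity.unitary_conj {U : Matrix n n ℂ} (hρ : IsDensity ρ) (hU : U ∈ unitaryGroup n ℂ) :
    IsDensity (star U * ρ * U) := by
  refine ⟨?_, ?_⟩
  · simpa [star_eq_conjTranspose] using hρ.1.conjTranspose_mul_mul_same U
  · rw [trace_mul_cycle, mem_unitaryGroup_iff.mp hU, one_mul, hρ.2]

lemma abs_eq_add_two_mul_negPart (x : ℝ) : |x| = x + 2 * x⁻ := by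
  nth_rw 2 [← posPart_sub_negPart x]
  rw [← posPart_add_negPart]
  ring

namespace Matrix.IsHermitian

lemma traceNorm_eq_sum_abs_eigenvalues (hA : A.IsHermitian) :
    traceNorm A = ∑ i, |hA.eigenvalues i| := by
  -- `Aᴴ * A = cfc (· ^ 2) A`, so the eigenvalues of `Aᴴ * A` are the `λᵢ ^ 2` up to permutation.
  have hB := (posSemidef_conjTranspose_mul_self A).1
  have hcharpoly := hA.charpoly_cfc_eq (fun x : ℝ => x ^ 2)
  rw [cfc_pow_id A 2 hA.isSelfAdjoint, show A ^ 2 = Aᴴ * A by rw [sq, hA.eq]] at hcharpoly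
  have hroots : Multiset.map hB.eigenvalues Finset.univ.val =
      Multiset.map (fun i => hA.eigenvalues i ^ 2) Finset.univ.val := by
    apply Multiset.map_injective (f := (RCLike.ofReal : ℝ → ℂ)) RCLike.ofReal_injective
    rw [Multiset.map_map, Multiset.map_map, ← hB.roots_charpoly_eq_eigenvalues, hcharpoly,
      Polynomial.roots_prod _ _
        (Finset.prod_ne_zero_iff.mpr fun i _ => Polynomial.X_sub_C_ne_zero _)]
    simp only [Polynomial.roots_X_sub_C, Multiset.bind_singleton]
    rfl
  have := congrArg (fun m => (m.map Real.sqrt).sum) hroots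
  simp only [Multiset.map_map] at this
  exact this.trans (Finset.sum_congr rfl fun i _ => Real.sqrt_sq_eq_abs _)

lemma traceNorm_eq (hA : A.IsHermitian) :
    traceNorm A = A.trace.re + 2 * ∑ i, (hA.eigenvalues i)⁻ := by
  simp [hA.traceNorm_eq_sum_abs_eigenvalues, hA.trace_eq_sum_eigenvalues,
    abs_eq_add_two_mul_negPart, Finset.sum_add_distrib, Finset.mul_sum]

lemma star_eigenvectorUnitary_mul_mul (hA : A.IsHermitian) :
    star (hA.eigenvectorUnitary : Matrix n n ℂ) * A * hA.eigenvectorUnitary =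
      diagonal (fun i => (hA.eigenvalues i : ℂ)) := by
  simpa [Function.comp_def] using hA.conjStarAlgAut_star_eigenvectorUnitary

lemma posSemidef_sub_smul_one (hA : A.IsHermitian) {s : ℝ}
    (hs : ∀ i, s ≤ hA.eigenvalues i) : (A - s • 1).PosSemidef := by
  set U : Matrix n n ℂ := ↑hA.eigenvectorUnitary
  have hU : U ∈ unitaryGroup n ℂ := hA.eigenvectorUnitary.2
  have hdiag :
      star U * (A - s • 1) * U = diagonal (fun i => ((hA.eigenvalues i - s : ℝ) : ℂ)) := by
    rw [Matrix.mul_sub, Matrix.sub_mul,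
      show star U * A * U = _ from hA.star_eigenvectorUnitary_mul_mul]
    ext i j
    by_cases h : i = j <;> simp [h, mem_unitaryGroup_iff'.mp hU]
  have hconj : A - s • 1 = U * (star U * (A - s • 1) * U) * Uᴴ := by
    rw [← star_eq_conjTranspose, Matrix.mul_assoc, Matrix.mul_assoc, mem_unitaryGroup_iff.mp hU,
      Matrix.mul_one, ← Matrix.mul_assoc, mem_unitaryGroup_iff.mp hU, Matrix.one_mul]
  rw [hconj, hdiag]
  exact (posSemidef_diagonal_iff.mpr fun i => Complex.zero_le_real.mpr
    (sub_nonneg.mpr (hs i))).mul_mul_conjTranspose_same U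

lemma sum_negPart_eigenvalues_le (hA : A.IsHermitian) (hρ : IsDensity ρ)
    {a b : ℝ} (hb : 0 ≤ b) (hpos : (A + a • ρ - b • 1).PosSemidef) :
    ∑ i, (hA.eigenvalues i)⁻ ≤ max 0 (a - b) := by
  set U : Matrix n n ℂ := ↑hA.eigenvectorUnitary
  have hU : U ∈ unitaryGroup n ℂ := hA.eigenvectorUnitary.2
  have hq := hρ.unitary_conj hU
  have hconj : star U * (A + a • ρ - b • 1) * U =
      diagonal (fun i => (hA.eigenvalues i : ℂ)) + a • (star U * ρ * U) - b • 1 := by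
    rw [← hA.star_eigenvectorUnitary_mul_mul]
    simp only [Matrix.mul_add, Matrix.add_mul, Matrix.mul_sub, Matrix.sub_mul, Matrix.mul_smul,
      Matrix.smul_mul, Matrix.mul_one, mem_unitaryGroup_iff'.mp hU]
    rfl
  have hpsd := hpos.conjTranspose_mul_mul_same U
  rw [← star_eq_conjTranspose, hconj] at hpsd
  have hentry (i : n) : 0 ≤ hA.eigenvalues i + a * ((star U * ρ * U) i i).re - b := by
    simpa using (Complex.nonneg_iff.mp (hpsd.diag_nonneg (i := i))).1
  calc ∑ i, (hA.eigenvalues i)⁻ ≤ ∑ i, max 0 (a - b) * ((star U * ρ * U) i i).re := by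
        refine Finset.sum_le_sum fun i _ => (negPart_def _).trans_le (max_le ?_ ?_)
        · have hK := mul_le_mul_of_nonneg_right (le_max_right 0 (a - b)) (hq.re_diag_nonneg i)
          nlinarith [hentry i, hq.re_diag_le_one i]
        · exact mul_nonneg (le_max_left _ _) (hq.re_diag_nonneg i)
    _ = max 0 (a - b) := by rw [← Finset.mul_sum, hq.sum_re_diag, mul_one]

lemma neg_re_trace_mul_le_sum_negPart (hA : A.IsHermitian) (hρ : IsDensity ρ) :
    -(ρ * A).trace.re ≤ ∑ i, (hA.eigenvalues i)⁻ := by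
  set U : Matrix n n ℂ := ↑hA.eigenvectorUnitary
  have hU : U ∈ unitaryGroup n ℂ := hA.eigenvectorUnitary.2
  have hq := hρ.unitary_conj hU
  have htrace : (ρ * A).trace = ∑ i, (star U * ρ * U) i i * hA.eigenvalues i := by
    have hUU : U * star U = 1 := mem_unitaryGroup_iff.mp hU
    calc (ρ * A).trace = (star U * ρ * U * (star U * A * U)).trace := by
          rw [show star U * ρ * U * (star U * A * U) = star U * (ρ * A) * U by
            simp only [Matrix.mul_assoc, ← Matrix.mul_assoc U, hUU, Matrix.one_mul],
            trace_mul_cycle, hUU, Matrix.one_mul]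
      _ = _ := by
          rw [show star U * A * U = _ from hA.star_eigenvectorUnitary_mul_mul]
          simp [trace, mul_diagonal]
  have hre : (ρ * A).trace.re = ∑ i, ((star U * ρ * U) i i).re * hA.eigenvalues i := by
    simp [htrace, Complex.re_sum]
  rw [hre, ← Finset.sum_neg_distrib]
  refine Finset.sum_le_sum fun i _ => ?_
  have h := neg_le_negPart (hA.eigenvalues i)
  nlinarith [hq.re_diag_nonneg i, hq.re_diag_le_one i, negPart_nonneg (hA.eigenvalues i)]

lemma traceNorm_le (hA : A.IsHermitian) (hρ : IsDensity ρ) {a b : ℝ} (hb : 0 ≤ b)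
    (hpos : (A + a • ρ - b • 1).PosSemidef) :
    traceNorm A ≤ A.trace.re + 2 * max 0 (a - b) := by
  rw [hA.traceNorm_eq]
  linarith [hA.sum_negPart_eigenvalues_le hρ hb hpos]

lemma le_traceNorm (hA : A.IsHermitian) (hρ : IsDensity ρ) :
    A.trace.re + 2 * max 0 (-(ρ * A).trace.re) ≤ traceNorm A := by
  rw [hA.traceNorm_eq]
  have hneg : max 0 (-(ρ * A).trace.re) ≤ ∑ i, (hA.eigenvalues i)⁻ :=
    max_le (Finset.sum_nonneg fun i _ => negPart_nonneg _) (hA.neg_re_trace_mul_le_sum_negPart hρ)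
  linarith

def eigenprojector (hA : A.IsHermitian) (i : n) : Matrix n n ℂ :=
  (hA.eigenvectorUnitary : Matrix n n ℂ) * single i i 1 *
    star (hA.eigenvectorUnitary : Matrix n n ℂ)

lemma isDensity_eigenprojector (hA : A.IsHermitian) (i : n) : IsDensity (hA.eigenprojector i) := by
  have hsingle : IsDensity (single i i (1 : ℂ)) := by
    refine ⟨?_, trace_single_eq_same _ _⟩
    rw [← diagonal_single]
    exact posSemidef_diagonal_iff.mpr fun j => by by_cases h : j = i <;> simp [h]
  simpa [eigenprojector] using hsingle.unitary_conj (Unitary.star_mem hA.eigenvectorUnitary.2)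

lemma trace_eigenprojector_mul (hA : A.IsHermitian) (i : n) (M : Matrix n n ℂ) :
    (hA.eigenprojector i * M).trace =
      (star (hA.eigenvectorUnitary : Matrix n n ℂ) * M * hA.eigenvectorUnitary) i i := by
  rw [eigenprojector, Matrix.mul_assoc, trace_mul_cycle, trace_mul_comm, trace_single_mul,
    one_smul]

lemma trace_eigenprojector_mul_self (hA : A.IsHermitian) (i : n) :
    (hA.eigenprojector i * A).trace = hA.eigenvalues i := by
  simp [trace_eigenprojector_mul, star_eigenvectorUnitary_mul_mul]

lemma trace_eigenprojector_mul_eigenprojector (hA : A.IsHermitian) (i j : n) :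
    (hA.eigenprojector i * hA.eigenprojector j).trace = if j = i then 1 else 0 := by
  have hU := hA.eigenvectorUnitary.2
  rw [trace_eigenprojector_mul, eigenprojector]
  simp only [Matrix.mul_assoc, mem_unitaryGroup_iff'.mp hU, Matrix.mul_one]
  simp only [← Matrix.mul_assoc, mem_unitaryGroup_iff'.mp hU, Matrix.one_mul]
  simp [single_apply]

end Matrix.IsHermitian

section Combination

variable {ρ₀ ρ₁ σ : Matrix n n ℂ} {α a c : ℝ}

lemma IsDensity.traceNorm_smul_sub_smul_add_smul_le (h₀ : IsDensity ρ₀) (h₁ : IsDensity ρ₁)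
    (hσ : IsDensity σ) {s : ℝ} (hs : ∀ i, s ≤ hσ.1.1.eigenvalues i) (hs0 : 0 ≤ s)
    (hα : 0 ≤ α) (hc : 0 ≤ c) :
    traceNorm (α • ρ₀ - a • ρ₁ + c • σ) ≤ α - a + c + 2 * max 0 (a - c * s) := by
  have hpos : (α • ρ₀ - a • ρ₁ + c • σ + a • ρ₁ - (c * s) • 1).PosSemidef := by
    rw [show α • ρ₀ - a • ρ₁ + c • σ + a • ρ₁ - (c * s) • 1 = α • ρ₀ + c • (σ - s • 1) by
      rw [smul_sub, smul_smul]; abel]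
    exact (h₀.1.smul hα).add ((hσ.1.1.posSemidef_sub_smul_one hs).smul hc)
  have := (h₀.isHermitian_smul_sub_smul_add_smul h₁ hσ).traceNorm_le h₁ (mul_nonneg hc hs0) hpos
  rwa [h₀.re_trace_smul_sub_smul_add_smul h₁ hσ] at this

lemma IsDensity.le_traceNorm_smul_eigenprojector_sub (hσ : IsDensity σ) {j k : n} (hkj : k ≠ j) :
    α - a + c + 2 * max 0 (a - c * hσ.1.1.eigenvalues j) ≤
      traceNorm (α • hσ.1.1.eigenprojector k - a • hσ.1.1.eigenprojector j + c • σ) := by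
  have hk := hσ.1.1.isDensity_eigenprojector k
  have hj := hσ.1.1.isDensity_eigenprojector j
  have hneg : -(hσ.1.1.eigenprojector j *
      (α • hσ.1.1.eigenprojector k - a • hσ.1.1.eigenprojector j + c • σ)).trace.re =
      a - c * hσ.1.1.eigenvalues j := by
    simp only [Matrix.mul_add, Matrix.mul_sub, Algebra.mul_smul_comm, trace_add, trace_sub,
      trace_smul, hσ.1.1.trace_eigenprojector_mul_eigenprojector, hkj, ↓reduceIte, smul_zero,
      Complex.real_smul, mul_one, zero_sub, hσ.1.1.trace_eigenprojector_mul_self, Complex.add_re,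
      Complex.neg_re, Complex.ofReal_re, Complex.mul_re, Complex.ofReal_im, mul_zero, sub_zero]
    ring
  have := (hk.isHermitian_smul_sub_smul_add_smul hj hσ (α := α) (a := a) (c := c)).le_traceNorm hj
  rwa [hk.re_trace_smul_sub_smul_add_smul hj hσ, hneg] at this

end Combination

theorem stmt13_general {d : ℕ} (hd : 2 ≤ d) (l : ℝ) (hl0 : 0 ≤ l) (hl1 : l ≤ 1)
    (σ : Matrix (Fin d) (Fin d) ℂ) (hσ : IsDensity σ)
    (s : ℝ) (hs1 : ∀ i, s ≤ hσ.1.1.eigenvalues i) (hs2 : ∃ i, hσ.1.1.eigenvalues i = s)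
    (S : Matrix (Fin d) (Fin d) ℂ → Matrix (Fin d) (Fin d) ℂ)
    (hS : ∀ ρ, S ρ = (l : ℂ) • ρ + (((1 - l : ℝ) : ℂ) * ρ.trace) • σ)
    (g₀ : ℝ) (hg0 : 1 / 2 ≤ g₀) :
    helstromUtility S g₀
      = max g₀ ((1 + l + (1 - l) * (1 - 2 * s) * (2 * g₀ - 1)) / 2) := by
  obtain ⟨j, rfl⟩ := hs2
  obtain ⟨k, hkj⟩ := Fintype.exists_ne_of_one_lt_card (by rw [Fintype.card_fin]; omega) j
  have hs0 := hσ.1.eigenvalues_nonneg j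
  have hc : 0 ≤ (1 - l) * (2 * g₀ - 1) := mul_nonneg (by linarith) (by linarith)
  have hupper {ρ₀ ρ₁} (h₀ : IsDensity ρ₀) (h₁ : IsDensity ρ₁) :=
    h₀.traceNorm_smul_sub_smul_add_smul_le h₁ hσ hs1 hs0 (mul_nonneg hl0 (by linarith)) hc
      (α := l * g₀) (a := l * (1 - g₀))
  have hgreatest : IsGreatest {u : ℝ | ∃ ρ₀ ρ₁, IsDensity ρ₀ ∧ IsDensity ρ₁ ∧
      u = (1 + traceNorm ((g₀ : ℂ) • S ρ₀ - ((1 - g₀ : ℝ) : ℂ) • S ρ₁)) / 2}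
      (g₀ + max 0 (l * (1 - g₀) - (1 - l) * (2 * g₀ - 1) * hσ.1.1.eigenvalues j)) := by
    have hk := hσ.1.1.isDensity_eigenprojector k
    have hj := hσ.1.1.isDensity_eigenprojector j
    refine ⟨⟨_, _, hk, hj, ?_⟩, ?_⟩
    · rw [smul_sub_smul_shiftedDepolarizing_eq hS hk hj]
      linarith [hupper hk hj, hσ.le_traceNorm_smul_eigenprojector_sub hkj (α := l * g₀)
        (a := l * (1 - g₀)) (c := (1 - l) * (2 * g₀ - 1))]
    · rintro u ⟨ρ₀, ρ₁, h₀, h₁, rfl⟩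
      rw [smul_sub_smul_shiftedDepolarizing_eq hS h₀ h₁]
      linarith [hupper h₀ h₁]
  rw [helstromUtility, hgreatest.csSup_eq, ← max_add_add_left, add_zero]
  congr 1
  ring

/-- binary discrimination utility of the shifted-depolarizing channel. -/
theorem stmt13 {d : ℕ} (hd : 2 ≤ d) (l : ℝ) (hl0 : 0 ≤ l) (hl1 : l ≤ 1)
    (σ : Matrix (Fin d) (Fin d) ℂ) (hσ : IsDensity σ)
    (s : ℝ) (hs1 : ∀ i, s ≤ hσ.1.1.eigenvalues i) (hs2 : ∃ i, hσ.1.1.eigenvalues i = s)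
    (S : Matrix (Fin d) (Fin d) ℂ → Matrix (Fin d) (Fin d) ℂ)
    (hS : ∀ ρ, S ρ = (l : ℂ) • ρ + (((1 - l : ℝ) : ℂ) * ρ.trace) • σ)
    (g₀ : ℝ) (hg0 : 1 / 2 ≤ g₀) (hg1 : g₀ ≤ 1) :
    helstromUtility S g₀
      = max g₀ ((1 + l + (1 - l) * (1 - 2 * s) * (2 * g₀ - 1)) / 2) :=
  stmt13_general hd l hl0 hl1 σ hσ s hs1 hs2 S hS g₀ hg0
end
end

section
/- For the 1→2 universal optimal cloning channel N : L(ℂ^d) → L(ℂ^d ⊗ ℂ^d), N(ρ) = (2/(d+1))·P_s(ρ ⊗ 𝟙)P_s, and any binary discrimination game g = diag(g_0, 1−g_0) with 1/2 ≤ g_0 ≤ 1, the utility is U(N, g) = (d + g_0)/(d + 1). In particular ‖g_0·N(|0⟩⟨0|) − (1−g_0)·N(|1⟩⟨1|)‖_1 = (d + 2g_0 − 1)/(d+1) for orthonormal |0⟩, |1⟩. -/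
open Matrix Kronecker
open scoped ComplexOrder

noncomputable section

variable {n : Type*} [Fintype n] [DecidableEq n]

/-- The swap operator on `ℂ^d ⊗ ℂ^d`. -/
def swapMat (d : ℕ) : Matrix (Fin d × Fin d) (Fin d × Fin d) ℂ :=
  Matrix.of fun p q => if p.1 = q.2 ∧ p.2 = q.1 then 1 else 0

/-- The projector onto the symmetric subspace of `ℂ^d ⊗ ℂ^d`. -/
def symProj (d : ℕ) : Matrix (Fin d × Fin d) (Fin d × Fin d) ℂ :=
  ((1 / 2 : ℂ)) • (1 + swapMat d)

/-- The 1 → 2 universal optimal cloning channel. -/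
def cloning (d : ℕ) (ρ : Matrix (Fin d) (Fin d) ℂ) :
    Matrix (Fin d × Fin d) (Fin d × Fin d) ℂ :=
  ((2 / (d + 1) : ℝ) : ℂ) • (symProj d * (ρ ⊗ₖ (1 : Matrix (Fin d) (Fin d) ℂ)) * symProj d)

/-!
For Hermitian `X`, `‖X‖₁ = 2 tr (X Q) - tr X` with `Q` the projector onto the nonnegative
eigenspace, so it suffices to bound `tr (X Q)` over `0 ≤ Q ≤ 1` for
`X = g₀ N(ρ) - (1 - g₀) N(σ) = (2 g₀ - 1) N(ρ) + (1 - g₀) (N(ρ) - N(σ))`.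
The first term contributes at most `2 g₀ - 1` because `N` is trace preserving. For the second,
`P_s (𝟙 ⊗ σ) P_s = P_s (σ ⊗ 𝟙) P_s` gives
`N(ρ) - N(σ) = 2/(d+1) · P_s (ρ ⊗ (𝟙 - σ) - (𝟙 - ρ) ⊗ σ) P_s`, a difference of positive
operators the first of which has trace `(d - tr ρσ)/2 ≤ d/2`.

For orthogonal pure states the bound is attained: there `|X|` can be written down explicitly
and identified by comparing squares.
-/

open scoped MatrixOrder in
theorem traceNorm_eq_re_trace {A C : Matrix n n ℂ} (hC : C.PosSemidef) (h : C * C = Aᴴ * A) :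
    traceNorm A = C.trace.re := by
  have hAA := posSemidef_conjTranspose_mul_self A
  obtain rfl : C = CFC.sqrt (Aᴴ * A) := ((CFC.sqrt_eq_iff _ _ hAA.nonneg hC.nonneg).mpr h).symm
  rw [CFC.sqrt_eq_cfc, cfc_nnreal_eq_real _ (Aᴴ * A), hAA.1.cfc_eq, IsHermitian.cfc,
    Unitary.conjStarAlgAut_apply, trace_mul_cycle, Unitary.coe_star_mul_self, one_mul,
    trace_diagonal]
  simp [traceNorm, max_eq_left (hAA.eigenvalues_nonneg _)]

namespace Matrix

open scoped MatrixOrder in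
theorem PosSemidef.re_trace_mul_nonneg_s16 {A B : Matrix n n ℂ} (hA : A.PosSemidef)
    (hB : B.PosSemidef) : 0 ≤ (A * B).trace.re := by
  obtain ⟨X, rfl⟩ := CStarAlgebra.nonneg_iff_eq_star_mul_self.mp hA.nonneg
  rw [star_eq_conjTranspose, mul_assoc, trace_mul_comm]
  exact (Complex.nonneg_iff.mp (hB.mul_mul_conjTranspose_same X).trace_nonneg).1

theorem PosSemidef.re_trace_mul_le {A Q : Matrix n n ℂ} (hA : A.PosSemidef)
    (hQ : (1 - Q).PosSemidef) : (A * Q).trace.re ≤ A.trace.re := by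
  have := hA.re_trace_mul_nonneg_s16 hQ
  rw [mul_sub, mul_one, trace_sub, Complex.sub_re] at this
  linarith

open scoped MatrixOrder in
theorem IsHermitian.exists_traceNorm_eq {X : Matrix n n ℂ} (hX : X.IsHermitian) :
    ∃ Q : Matrix n n ℂ, Q.PosSemidef ∧ (1 - Q).PosSemidef ∧
      traceNorm X = 2 * (X * Q).trace.re - X.trace.re := by
  have hcont (f : ℝ → ℝ) : ContinuousOn f (spectrum ℝ X) := X.finite_real_spectrum.continuousOn f
  set f : ℝ → ℝ := fun x => if 0 ≤ x then 1 else 0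
  have hf (x : ℝ) : 0 ≤ f x ∧ f x ≤ 1 := by by_cases hx : 0 ≤ x <;> simp [f, hx]
  refine ⟨cfc f X, (cfc_nonneg fun x _ => (hf x).1).posSemidef,
    (le_iff.mp (cfc_le_one f X fun x _ => (hf x).2)), ?_⟩
  have habs : cfc (fun x : ℝ => |x|) X = (2 : ℝ) • (X * cfc f X) - X := by
    have : (fun x : ℝ => |x|) = fun x => 2 * (x * f x) - x := by
      funext x; by_cases hx : 0 ≤ x
      · simp [f, hx, abs_of_nonneg hx]; ring
      · simp [f, hx, abs_of_neg (not_le.mp hx)]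
    rw [this, cfc_sub _ _ X (hcont _) (hcont _), cfc_const_mul _ _ X (hcont _),
      cfc_mul _ _ X (hcont _) (hcont _), cfc_id' ℝ X]
  have hsq : cfc (fun x : ℝ => |x|) X * cfc (fun x : ℝ => |x|) X = Xᴴ * X := by
    rw [← cfc_mul _ _ X (hcont _) (hcont _), hX.eq]
    simp only [abs_mul_abs_self]
    rw [cfc_mul _ _ X (hcont _) (hcont _), cfc_id' ℝ X]
  rw [traceNorm_eq_re_trace (cfc_nonneg fun x _ => abs_nonneg x).posSemidef hsq, habs,
    trace_sub, trace_smul, Complex.sub_re, Complex.smul_re, smul_eq_mul]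

theorem kronecker_sub {l m p q α : Type*} [Ring α] (A : Matrix l m α) (B C : Matrix p q α) :
    A ⊗ₖ (B - C) = A ⊗ₖ B - A ⊗ₖ C := by
  ext; simp [mul_sub]

theorem sub_kronecker {l m p q α : Type*} [Ring α] (A B : Matrix l m α) (C : Matrix p q α) :
    (A - B) ⊗ₖ C = A ⊗ₖ C - B ⊗ₖ C := by
  ext; simp [sub_mul]

theorem kronecker_mul_kronecker_mul {l m p q r s t α : Type*} [Fintype m] [Fintype q]
    [Fintype r] [Fintype s] [CommSemiring α] (A : Matrix l m α) (B : Matrix p q α)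
    (C : Matrix m r α) (D : Matrix q s α) (M : Matrix (r × s) t α) :
    (A ⊗ₖ B) * ((C ⊗ₖ D) * M) = ((A * C) ⊗ₖ (B * D)) * M := by
  rw [← Matrix.mul_assoc, ← mul_kronecker_mul]

end Matrix

open scoped MatrixOrder in
theorem IsDensity.posSemidef_one_sub {ρ : Matrix n n ℂ} (hρ : IsDensity ρ) :
    (1 - ρ).PosSemidef := by
  obtain ⟨hpsd, htr⟩ := hρ
  have hsum : ∑ i, hpsd.1.eigenvalues i = 1 := by
    simpa [htr] using congrArg Complex.re hpsd.1.trace_eq_sum_eigenvalues.symm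
  have hle : ρ ≤ algebraMap ℝ (Matrix n n ℂ) 1 := by
    refine (le_algebraMap_iff_spectrum_le hpsd.1.isSelfAdjoint).mpr fun x hx => ?_
    obtain ⟨i, rfl⟩ := hpsd.1.spectrum_real_eq_range_eigenvalues ▸ hx
    exact hsum ▸ Finset.single_le_sum (fun j _ => hpsd.eigenvalues_nonneg j) (Finset.mem_univ i)
  rwa [map_one, le_iff] at hle

theorem isDensity_vecMulVec {m : Type*} [Fintype m] {v : m → ℂ} (hv : star v ⬝ᵥ v = 1) :
    IsDensity (vecMulVec v (star v)) :=
  ⟨posSemidef_vecMulVec_self_star v, by rw [trace_vecMulVec, dotProduct_comm, hv]⟩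

section SymmetricSubspace

variable {d : ℕ}

theorem swapMat_conjTranspose : (swapMat d)ᴴ = swapMat d := by
  ext ⟨i, j⟩ ⟨k, l⟩
  simp [swapMat, conjTranspose_apply, and_comm, eq_comm]

theorem swapMat_mul_swapMat : swapMat d * swapMat d = 1 := by
  ext ⟨i, j⟩ ⟨k, l⟩
  simp [swapMat, mul_apply, Fintype.sum_prod_type, one_apply, Prod.ext_iff, ite_and, eq_comm]

theorem swapMat_mul_kronecker (A B : Matrix (Fin d) (Fin d) ℂ) :
    swapMat d * (A ⊗ₖ B) = (B ⊗ₖ A) * swapMat d := by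
  ext ⟨i, j⟩ ⟨k, l⟩
  simp [swapMat, mul_apply, Fintype.sum_prod_type, ite_and, mul_comm]

theorem swapMat_mul_kronecker_mul {ι : Type*} (A B : Matrix (Fin d) (Fin d) ℂ)
    (M : Matrix (Fin d × Fin d) ι ℂ) :
    swapMat d * ((A ⊗ₖ B) * M) = (B ⊗ₖ A) * (swapMat d * M) := by
  rw [← Matrix.mul_assoc, swapMat_mul_kronecker, Matrix.mul_assoc]

theorem trace_kronecker_mul_swapMat (A B : Matrix (Fin d) (Fin d) ℂ) :
    ((A ⊗ₖ B) * swapMat d).trace = (A * B).trace := by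
  simp [trace, mul_apply, swapMat, Fintype.sum_prod_type, ite_and]

theorem symProj_conjTranspose : (symProj d)ᴴ = symProj d := by
  simp [symProj, conjTranspose_smul, swapMat_conjTranspose]

theorem symProj_mul_kronecker_mul_symProj (A B : Matrix (Fin d) (Fin d) ℂ) :
    symProj d * (A ⊗ₖ B) * symProj d
      = (1 / 4 : ℂ) • (A ⊗ₖ B + B ⊗ₖ A + (A ⊗ₖ B + B ⊗ₖ A) * swapMat d) := by
  simp only [symProj, smul_mul_assoc, mul_smul_comm, add_mul, mul_add, one_mul,
    mul_one, swapMat_mul_kronecker, mul_assoc, swapMat_mul_swapMat]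
  module

theorem symProj_mul_kronecker_comm (A B : Matrix (Fin d) (Fin d) ℂ) :
    symProj d * (A ⊗ₖ B) * symProj d = symProj d * (B ⊗ₖ A) * symProj d := by
  rw [symProj_mul_kronecker_mul_symProj, symProj_mul_kronecker_mul_symProj, add_comm (A ⊗ₖ B)]

theorem trace_symProj_mul_kronecker_mul_symProj (A B : Matrix (Fin d) (Fin d) ℂ) :
    (symProj d * (A ⊗ₖ B) * symProj d).trace = (A.trace * B.trace + (A * B).trace) / 2 := by
  rw [symProj_mul_kronecker_mul_symProj, trace_smul, add_mul, trace_add, trace_add, trace_add,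
    trace_kronecker, trace_kronecker, trace_kronecker_mul_swapMat, trace_kronecker_mul_swapMat,
    trace_mul_comm B A, smul_eq_mul]
  ring

theorem Matrix.PosSemidef.symProj_mul_mul_symProj {X : Matrix (Fin d × Fin d) (Fin d × Fin d) ℂ}
    (hX : X.PosSemidef) : (symProj d * X * symProj d).PosSemidef := by
  simpa [symProj_conjTranspose] using hX.mul_mul_conjTranspose_same (symProj d)

end SymmetricSubspace

section Cloning

variable {d : ℕ}

theorem cloning_posSemidef {ρ : Matrix (Fin d) (Fin d) ℂ} (hρ : ρ.PosSemidef) :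
    (cloning d ρ).PosSemidef :=
  (hρ.kronecker PosSemidef.one).symProj_mul_mul_symProj.smul (by positivity)

theorem trace_cloning (ρ : Matrix (Fin d) (Fin d) ℂ) : (cloning d ρ).trace = ρ.trace := by
  have hd : (d : ℂ) + 1 ≠ 0 := by exact_mod_cast d.succ_ne_zero
  rw [cloning, trace_smul, trace_symProj_mul_kronecker_mul_symProj, mul_one, trace_one,
    Fintype.card_fin, smul_eq_mul]
  push_cast
  field_simp

theorem re_trace_cloning_mul_le_one {ρ : Matrix (Fin d) (Fin d) ℂ} (hρ : IsDensity ρ)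
    {Q : Matrix (Fin d × Fin d) (Fin d × Fin d) ℂ} (hQ : (1 - Q).PosSemidef) :
    (cloning d ρ * Q).trace.re ≤ 1 := by
  simpa [trace_cloning, hρ.2] using (cloning_posSemidef hρ.1).re_trace_mul_le hQ

theorem cloning_sub_cloning (ρ σ : Matrix (Fin d) (Fin d) ℂ) :
    cloning d ρ - cloning d σ = ((2 / (d + 1) : ℝ) : ℂ) •
      (symProj d * (ρ ⊗ₖ (1 - σ)) * symProj d - symProj d * ((1 - ρ) ⊗ₖ σ) * symProj d) := by
  rw [cloning, cloning, ← smul_sub, kronecker_sub, sub_kronecker, mul_sub, sub_mul, mul_sub,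
    sub_mul, symProj_mul_kronecker_comm 1 σ]
  abel_nf

theorem re_trace_cloning_sub_cloning_mul_le {ρ σ : Matrix (Fin d) (Fin d) ℂ}
    (hρ : IsDensity ρ) (hσ : IsDensity σ) {Q : Matrix (Fin d × Fin d) (Fin d × Fin d) ℂ}
    (hQ : Q.PosSemidef) (hQ' : (1 - Q).PosSemidef) :
    ((cloning d ρ - cloning d σ) * Q).trace.re ≤ d / (d + 1) := by
  set Xp := symProj d * (ρ ⊗ₖ (1 - σ)) * symProj d
  set Xm := symProj d * ((1 - ρ) ⊗ₖ σ) * symProj d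
  have hXp : Xp.PosSemidef :=
    (hρ.1.kronecker hσ.posSemidef_one_sub).symProj_mul_mul_symProj
  have hXm : 0 ≤ (Xm * Q).trace.re :=
    (hρ.posSemidef_one_sub.kronecker hσ.1).symProj_mul_mul_symProj.re_trace_mul_nonneg_s16 hQ
  have htrXp : Xp.trace.re = (d - (ρ * σ).trace.re) / 2 := by
    rw [trace_symProj_mul_kronecker_mul_symProj, mul_sub, mul_one, trace_sub, trace_sub,
      hρ.2, hσ.2, trace_one, Fintype.card_fin]
    simp
  have hρσ : 0 ≤ (ρ * σ).trace.re := hρ.1.re_trace_mul_nonneg_s16 hσ.1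
  have hle := hXp.re_trace_mul_le hQ'
  rw [cloning_sub_cloning, smul_mul_assoc, trace_smul, sub_mul, trace_sub, smul_eq_mul,
    Complex.re_ofReal_mul, Complex.sub_re]
  calc 2 / ((d : ℝ) + 1) * ((Xp * Q).trace.re - (Xm * Q).trace.re)
      ≤ 2 / ((d : ℝ) + 1) * (d / 2) := by gcongr; linarith
    _ = d / (d + 1) := by ring

end Cloning

section Helstrom

variable {d : ℕ} {g₀ : ℝ} {ρ σ : Matrix (Fin d) (Fin d) ℂ}

theorem re_trace_helstrom_cloning_mul_le (hρ : IsDensity ρ) (hσ : IsDensity σ)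
    (hg0 : 1 / 2 ≤ g₀) (hg1 : g₀ ≤ 1) {Q : Matrix (Fin d × Fin d) (Fin d × Fin d) ℂ}
    (hQ : Q.PosSemidef) (hQ' : (1 - Q).PosSemidef) :
    (((g₀ : ℂ) • cloning d ρ - ((1 - g₀ : ℝ) : ℂ) • cloning d σ) * Q).trace.re
      ≤ (d * g₀ + 2 * g₀ - 1) / (d + 1) := by
  have hsplit : (g₀ : ℂ) • cloning d ρ - ((1 - g₀ : ℝ) : ℂ) • cloning d σ
      = ((2 * g₀ - 1 : ℝ) : ℂ) • cloning d ρ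
        + ((1 - g₀ : ℝ) : ℂ) • (cloning d ρ - cloning d σ) := by
    push_cast
    module
  have h₁ := re_trace_cloning_mul_le_one hρ hQ'
  have h₂ := re_trace_cloning_sub_cloning_mul_le hρ hσ hQ hQ'
  rw [hsplit, add_mul, smul_mul_assoc, smul_mul_assoc, trace_add, trace_smul, trace_smul,
    smul_eq_mul, smul_eq_mul, Complex.add_re, Complex.re_ofReal_mul, Complex.re_ofReal_mul]
  calc (2 * g₀ - 1) * (cloning d ρ * Q).trace.re
        + (1 - g₀) * ((cloning d ρ - cloning d σ) * Q).trace.re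
      ≤ (2 * g₀ - 1) * 1 + (1 - g₀) * (d / (d + 1)) := by
        gcongr
        linarith
    _ = (d * g₀ + 2 * g₀ - 1) / (d + 1) := by field_simp; ring

theorem isHermitian_helstrom_cloning (hρ : ρ.PosSemidef) (hσ : σ.PosSemidef) (hg0 : 0 ≤ g₀)
    (hg1 : g₀ ≤ 1) :
    ((g₀ : ℂ) • cloning d ρ - ((1 - g₀ : ℝ) : ℂ) • cloning d σ).IsHermitian :=
  ((cloning_posSemidef hρ).smul (by exact_mod_cast hg0)).isHermitian.sub
    ((cloning_posSemidef hσ).smul (by exact_mod_cast sub_nonneg.mpr hg1)).isHermitian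

theorem traceNorm_helstrom_cloning_le (hρ : IsDensity ρ) (hσ : IsDensity σ)
    (hg0 : 1 / 2 ≤ g₀) (hg1 : g₀ ≤ 1) :
    traceNorm ((g₀ : ℂ) • cloning d ρ - ((1 - g₀ : ℝ) : ℂ) • cloning d σ)
      ≤ (d + 2 * g₀ - 1) / (d + 1) := by
  obtain ⟨Q, hQ, hQ', htn⟩ :=
    (isHermitian_helstrom_cloning hρ.1 hσ.1 (by linarith) hg1).exists_traceNorm_eq
  have htr : ((g₀ : ℂ) • cloning d ρ - ((1 - g₀ : ℝ) : ℂ) • cloning d σ).trace.re = 2 * g₀ - 1 := by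
    simp [trace_cloning, hρ.2, hσ.2]
    ring
  have hbound := re_trace_helstrom_cloning_mul_le hρ hσ hg0 hg1 hQ hQ'
  rw [htn, htr]
  calc 2 * (((g₀ : ℂ) • cloning d ρ - ((1 - g₀ : ℝ) : ℂ) • cloning d σ) * Q).trace.re
        - (2 * g₀ - 1)
      ≤ 2 * ((d * g₀ + 2 * g₀ - 1) / (d + 1)) - (2 * g₀ - 1) := by linarith
    _ = (d + 2 * g₀ - 1) / (d + 1) := by field_simp; ring

end Helstrom

section OrthogonalPureStates

variable {d : ℕ} {ρ₀ ρ₁ : Matrix (Fin d) (Fin d) ℂ}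

/- The ranges of `M₀ = P_s (ρ₀ ⊗ 𝟙) P_s` and `M₁` meet only in the symmetrised `ρ₀ ⊗ ρ₁`, the
range of `T = P_s (ρ₀ ⊗ ρ₁) P_s`, where `M₀`, `M₁` and `T` all act as `1/2`. So `a • M₀ - b • M₁`
and `a • M₀ + b • M₁ - 2b • T` agree there and differ by the sign of `b • M₁` elsewhere: for
`a ≥ b ≥ 0` the latter is the absolute value of the former. -/
theorem mul_self_symProj_sandwich_of_orthogonal (a b : ℂ)
    (h00 : ρ₀ * ρ₀ = ρ₀) (h11 : ρ₁ * ρ₁ = ρ₁) (h01 : ρ₀ * ρ₁ = 0) (h10 : ρ₁ * ρ₀ = 0) :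
    (a • (symProj d * (ρ₀ ⊗ₖ 1) * symProj d) + b • (symProj d * (ρ₁ ⊗ₖ 1) * symProj d)
      - (2 * b) • (symProj d * (ρ₀ ⊗ₖ ρ₁) * symProj d))
    * (a • (symProj d * (ρ₀ ⊗ₖ 1) * symProj d) + b • (symProj d * (ρ₁ ⊗ₖ 1) * symProj d)
      - (2 * b) • (symProj d * (ρ₀ ⊗ₖ ρ₁) * symProj d))
    = (a • (symProj d * (ρ₀ ⊗ₖ 1) * symProj d) - b • (symProj d * (ρ₁ ⊗ₖ 1) * symProj d))
    * (a • (symProj d * (ρ₀ ⊗ₖ 1) * symProj d) - b • (symProj d * (ρ₁ ⊗ₖ 1) * symProj d)) := by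
  simp only [symProj_mul_kronecker_mul_symProj]
  simp only [smul_add, smul_sub, sub_mul, mul_sub, add_mul, mul_add, smul_mul_assoc,
    mul_smul_comm, smul_smul, mul_assoc]
  simp only [kronecker_mul_kronecker_mul, swapMat_mul_kronecker_mul, ← mul_kronecker_mul,
    swapMat_mul_kronecker, swapMat_mul_swapMat, mul_one, one_mul, h00, h11, h01, h10,
    zero_kronecker, kronecker_zero, zero_mul, smul_zero, add_zero, zero_add]
  module

theorem symProj_sandwich_eq_add (a b : ℂ) :
    a • (symProj d * (ρ₀ ⊗ₖ 1) * symProj d) + b • (symProj d * (ρ₁ ⊗ₖ 1) * symProj d)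
      - (2 * b) • (symProj d * (ρ₀ ⊗ₖ ρ₁) * symProj d)
    = b • (symProj d * (ρ₀ ⊗ₖ (1 - ρ₁)) * symProj d + symProj d * ((1 - ρ₀) ⊗ₖ ρ₁) * symProj d)
      + (a - b) • (symProj d * (ρ₀ ⊗ₖ 1) * symProj d) := by
  rw [kronecker_sub, sub_kronecker, mul_sub, sub_mul, mul_sub, sub_mul,
    symProj_mul_kronecker_comm 1 ρ₁]
  module

theorem traceNorm_helstrom_cloning_of_orthogonal {g₀ : ℝ} (hg0 : 1 / 2 ≤ g₀) (hg1 : g₀ ≤ 1)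
    (hρ₀ : IsDensity ρ₀) (hρ₁ : IsDensity ρ₁)
    (h00 : ρ₀ * ρ₀ = ρ₀) (h11 : ρ₁ * ρ₁ = ρ₁) (h01 : ρ₀ * ρ₁ = 0) (h10 : ρ₁ * ρ₀ = 0) :
    traceNorm ((g₀ : ℂ) • cloning d ρ₀ - ((1 - g₀ : ℝ) : ℂ) • cloning d ρ₁)
      = (d + 2 * g₀ - 1) / (d + 1) := by
  set γ : ℝ := 2 / (d + 1)
  set M₀ := symProj d * (ρ₀ ⊗ₖ 1) * symProj d
  set M₁ := symProj d * (ρ₁ ⊗ₖ 1) * symProj d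
  set T := symProj d * (ρ₀ ⊗ₖ ρ₁) * symProj d
  set a : ℂ := ((γ * g₀ : ℝ) : ℂ)
  set b : ℂ := ((γ * (1 - g₀) : ℝ) : ℂ)
  have hX : (g₀ : ℂ) • cloning d ρ₀ - ((1 - g₀ : ℝ) : ℂ) • cloning d ρ₁ = a • M₀ - b • M₁ := by
    rw [cloning, cloning, smul_smul, smul_smul, ← Complex.ofReal_mul, ← Complex.ofReal_mul,
      mul_comm g₀, mul_comm (1 - g₀)]
  have hXh : (a • M₀ - b • M₁).IsHermitian :=
    hX ▸ isHermitian_helstrom_cloning hρ₀.1 hρ₁.1 (by linarith) hg1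
  have hC : (a • M₀ + b • M₁ - (2 * b) • T).PosSemidef := by
    have hab : a - b = ((γ * (2 * g₀ - 1) : ℝ) : ℂ) := by push_cast [a, b]; ring
    rw [symProj_sandwich_eq_add, hab]
    refine .add (.smul (.add ?_ ?_) ?_) (.smul ?_ ?_)
    · exact (hρ₀.1.kronecker hρ₁.posSemidef_one_sub).symProj_mul_mul_symProj
    · exact (hρ₀.posSemidef_one_sub.kronecker hρ₁.1).symProj_mul_mul_symProj
    · exact Complex.zero_le_real.mpr (mul_nonneg (by positivity) (by linarith))
    · exact (hρ₀.1.kronecker PosSemidef.one).symProj_mul_mul_symProj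
    · exact Complex.zero_le_real.mpr (mul_nonneg (by positivity) (by linarith))
  have htr : (a • M₀ + b • M₁ - (2 * b) • T).trace = (((d + 2 * g₀ - 1) / (d + 1) : ℝ) : ℂ) := by
    have hd : (d : ℂ) + 1 ≠ 0 := by exact_mod_cast d.succ_ne_zero
    simp only [M₀, M₁, T, trace_sub, trace_add, trace_smul, trace_symProj_mul_kronecker_mul_symProj,
      mul_one, h01, trace_zero, hρ₀.2, hρ₁.2, trace_one, Fintype.card_fin, a, b, γ, smul_eq_mul]
    push_cast
    field_simp
    ring
  rw [hX, traceNorm_eq_re_trace hC (by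
    rw [hXh.eq, mul_self_symProj_sandwich_of_orthogonal a b h00 h11 h01 h10]), htr,
    Complex.ofReal_re]

end OrthogonalPureStates

theorem stmt16_general {d : ℕ} (g₀ : ℝ) (hg0 : 1 / 2 ≤ g₀) (hg1 : g₀ ≤ 1)
    (v₀ v₁ : Fin d → ℂ)
    (h₀ : star v₀ ⬝ᵥ v₀ = 1) (h₁ : star v₁ ⬝ᵥ v₁ = 1) (h01 : star v₀ ⬝ᵥ v₁ = 0) :
    helstromUtility (cloning d) g₀ = (d + g₀) / (d + 1) ∧
    traceNorm ((g₀ : ℂ) • cloning d (Matrix.vecMulVec v₀ (star v₀))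
        - ((1 - g₀ : ℝ) : ℂ) • cloning d (Matrix.vecMulVec v₁ (star v₁)))
      = (d + 2 * g₀ - 1) / (d + 1) := by
  have h10 : star v₁ ⬝ᵥ v₀ = 0 := by rw [star_dotProduct, h01, star_zero]
  have hpure := traceNorm_helstrom_cloning_of_orthogonal hg0 hg1
    (isDensity_vecMulVec h₀) (isDensity_vecMulVec h₁)
    (by rw [vecMulVec_mul_vecMulVec, h₀, one_smul]) (by rw [vecMulVec_mul_vecMulVec, h₁, one_smul])
    (by rw [vecMulVec_mul_vecMulVec, h01, zero_smul, vecMulVec_zero])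
    (by rw [vecMulVec_mul_vecMulVec, h10, zero_smul, vecMulVec_zero])
  have hd : (d : ℝ) + 1 ≠ 0 := by positivity
  refine ⟨IsGreatest.csSup_eq ⟨⟨_, _, isDensity_vecMulVec h₀, isDensity_vecMulVec h₁, ?_⟩, ?_⟩,
    hpure⟩
  · rw [hpure]
    field_simp
    ring
  · rintro _ ⟨ρ, σ, hρ, hσ, rfl⟩
    calc (1 + traceNorm ((g₀ : ℂ) • cloning d ρ - ((1 - g₀ : ℝ) : ℂ) • cloning d σ)) / 2
        ≤ (1 + (d + 2 * g₀ - 1) / (d + 1)) / 2 := by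
          gcongr
          exact traceNorm_helstrom_cloning_le hρ hσ hg0 hg1
      _ = (d + g₀) / (d + 1) := by
          field_simp
          ring

/-- binary discrimination utility of the 1 → 2 universal optimal cloning
channel. -/
theorem stmt16 {d : ℕ} (hd : 2 ≤ d) (g₀ : ℝ) (hg0 : 1 / 2 ≤ g₀) (hg1 : g₀ ≤ 1)
    (v₀ v₁ : Fin d → ℂ)
    (h₀ : star v₀ ⬝ᵥ v₀ = 1) (h₁ : star v₁ ⬝ᵥ v₁ = 1) (h01 : star v₀ ⬝ᵥ v₁ = 0) :
    helstromUtility (cloning d) g₀ = (d + g₀) / (d + 1) ∧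
    traceNorm ((g₀ : ℂ) • cloning d (Matrix.vecMulVec v₀ (star v₀))
        - ((1 - g₀ : ℝ) : ℂ) • cloning d (Matrix.vecMulVec v₁ (star v₁)))
      = (d + 2 * g₀ - 1) / (d + 1) :=
  stmt16_general g₀ hg0 hg1 v₀ v₁ h₀ h₁ h01
end
end

section
/- The partial trace over the second factor of the 1→2 universal optimal cloning channel N(ρ) = (2/(d+1))·P_s(ρ ⊗ 𝟙)P_s is the depolarizing channel D_λ(ρ) = λρ + (1−λ)Tr[ρ]·𝟙/d with λ = (d+2)/(2(d+1)); explicitly, Tr_2[N(ρ)] = ((d+2)/(2(d+1)))ρ + (d/(2(d+1)))·Tr[ρ]·𝟙/d. -/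
open Matrix Kronecker
open scoped ComplexOrder

noncomputable section

variable {n : Type*} [Fintype n] [DecidableEq n]

/-- Partial trace over the second tensor factor. -/
def ptrace2 {d : ℕ} (M : Matrix (Fin d × Fin d) (Fin d × Fin d) ℂ) :
    Matrix (Fin d) (Fin d) ℂ :=
  Matrix.of fun i j => ∑ k, M (i, k) (j, k)

lemma ptrace2_smul {d : ℕ} (c : ℂ) (M : Matrix (Fin d × Fin d) (Fin d × Fin d) ℂ) :
    ptrace2 (c • M) = c • ptrace2 M := by
  ext i j; simp [ptrace2, Finset.mul_sum]

lemma ptrace2_add {d : ℕ} (M N : Matrix (Fin d × Fin d) (Fin d × Fin d) ℂ) :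
    ptrace2 (M + N) = ptrace2 M + ptrace2 N := by
  ext i j; simp [ptrace2, Finset.sum_add_distrib]

lemma pt1 {d : ℕ} (ρ : Matrix (Fin d) (Fin d) ℂ) :
    ptrace2 (ρ ⊗ₖ (1 : Matrix (Fin d) (Fin d) ℂ)) = (d : ℂ) • ρ := by
  ext i j
  simp [ptrace2, Matrix.one_apply, mul_comm]

lemma pt2 {d : ℕ} (ρ : Matrix (Fin d) (Fin d) ℂ) :
    ptrace2 (swapMat d * (ρ ⊗ₖ (1 : Matrix (Fin d) (Fin d) ℂ))) = ρ := by
  ext i j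
  simp [ptrace2, Matrix.mul_apply, swapMat, Fintype.sum_prod_type, Matrix.one_apply,
    ite_and, eq_comm]

lemma pt3 {d : ℕ} (ρ : Matrix (Fin d) (Fin d) ℂ) :
    ptrace2 ((ρ ⊗ₖ (1 : Matrix (Fin d) (Fin d) ℂ)) * swapMat d) = ρ := by
  ext i j
  simp [ptrace2, Matrix.mul_apply, swapMat, Fintype.sum_prod_type, Matrix.one_apply,
    ite_and, eq_comm]

lemma pt4 {d : ℕ} (ρ : Matrix (Fin d) (Fin d) ℂ) :
    ptrace2 (swapMat d * (ρ ⊗ₖ (1 : Matrix (Fin d) (Fin d) ℂ)) * swapMat d)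
      = ρ.trace • (1 : Matrix (Fin d) (Fin d) ℂ) := by
  ext i j
  simp [ptrace2, Matrix.mul_apply, swapMat, Fintype.sum_prod_type, Matrix.one_apply,
    ite_and, eq_comm, Matrix.trace, Matrix.diag]

/-- the partial trace of the cloning channel is a depolarizing channel with
`λ = (d+2)/(2(d+1))`. -/
theorem stmt17 {d : ℕ} (hd : 0 < d) (ρ : Matrix (Fin d) (Fin d) ℂ) :
    ptrace2 (cloning d ρ)
      = (((d + 2) / (2 * (d + 1)) : ℝ) : ℂ) • ρ
        + (((d : ℝ) / (2 * (d + 1)) : ℝ) : ℂ) •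
            (ρ.trace • ((1 / (d : ℂ)) • (1 : Matrix (Fin d) (Fin d) ℂ))) := by
  have hX : symProj d * (ρ ⊗ₖ (1 : Matrix (Fin d) (Fin d) ℂ)) * symProj d
      = ((1/4 : ℂ)) • ((ρ ⊗ₖ (1 : Matrix (Fin d) (Fin d) ℂ))
        + swapMat d * (ρ ⊗ₖ (1 : Matrix (Fin d) (Fin d) ℂ))
        + (ρ ⊗ₖ (1 : Matrix (Fin d) (Fin d) ℂ)) * swapMat d
        + swapMat d * (ρ ⊗ₖ (1 : Matrix (Fin d) (Fin d) ℂ)) * swapMat d) := by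
    simp only [symProj, Matrix.smul_mul, Matrix.mul_smul, add_mul, mul_add, one_mul, mul_one,
      smul_smul, smul_add]
    norm_num
    abel
  rw [cloning, hX, smul_smul, ptrace2_smul, ptrace2_add, ptrace2_add, ptrace2_add,
    pt1, pt2, pt3, pt4]
  have hdC : (d : ℂ) ≠ 0 := Nat.cast_ne_zero.mpr hd.ne'
  have hd1 : ((d : ℂ) + 1) ≠ 0 := by
    have : ((d + 1 : ℕ) : ℂ) ≠ 0 := Nat.cast_ne_zero.mpr (Nat.succ_ne_zero d)
    simpa using this
  ext i j
  push_cast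
  simp only [Matrix.add_apply, Matrix.smul_apply, smul_eq_mul]
  field_simp
  ring

end
end

section
/- Let M(ρ) = Σ_y Tr[ρπ_y]|y⟩⟨y| be a quantum-classical channel for a POVM {π_y} and orthonormal basis {|y⟩}. For any game g, U(M, g) = max over deterministic stochastic matrices S (0/1-valued matrices with exactly one 1 in each column, Σ_z S_{z,y} = 1 for all y) of Σ_x λ_max(Σ_{y,z} g_{x,z} S_{z,y} π_y), where λ_max denotes the largest eigenvalue. -/
open Matrix Kronecker
open scoped ComplexOrder

noncomputable section

variable {n : Type*} [Fintype n] [DecidableEq n]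

/-! The payoff of the quantum-classical channel sees a decoding POVM `τ` only through the
column-stochastic matrix `t z y = Re ⟨y|τ z|y⟩`, and is linear in it, so column by column it is
maximised by a deterministic decoding `f : Fin m → Fin q`. The payoff of `f` is
`∑ x, Re tr (ρ x * A x f)` with `A x f = ∑ y, g x (f y) • π y`, and over density matrices
`Re tr (ρ * A)` is maximised by `λ_max A`: the bound holds because `λ_max A • 1 - A` is positive
semidefinite, and the projector onto a top eigenvector attains it. -/

section Spectral

variable {𝕜 ι : Type*} [RCLike 𝕜] [Fintype ι] [DecidableEq ι]

open scoped MatrixOrder in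
lemma Matrix.PosSemidef.trace_mul_nonneg_s18 {P Q : Matrix ι ι 𝕜} (hP : P.PosSemidef)
    (hQ : Q.PosSemidef) : 0 ≤ (P * Q).trace := by
  obtain ⟨B, rfl⟩ := CStarAlgebra.nonneg_iff_eq_star_mul_self.mp hQ.nonneg
  rw [← Matrix.mul_assoc, trace_mul_cycle, star_eq_conjTranspose]
  exact (hP.mul_mul_conjTranspose_same B).trace_nonneg

open scoped MatrixOrder in
lemma Matrix.IsHermitian.posSemidef_smul_one_sub {A : Matrix ι ι 𝕜} (hA : A.IsHermitian) {c : ℝ}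
    (hc : ∀ i, hA.eigenvalues i ≤ c) : ((c : 𝕜) • 1 - A).PosSemidef := by
  have hA_le : A ≤ algebraMap ℝ (Matrix ι ι 𝕜) c :=
    le_algebraMap_of_spectrum_le (by simpa [hA.spectrum_real_eq_range_eigenvalues] using hc)
      hA.isSelfAdjoint
  rw [le_iff, Algebra.algebraMap_eq_smul_one] at hA_le
  rwa [← RCLike.real_smul_eq_coe_smul (K := 𝕜)]

lemma Matrix.PosSemidef.re_trace_mul_le_s18 {ρ A : Matrix ι ι 𝕜} (hρ : ρ.PosSemidef)
    (hA : A.IsHermitian) {c : ℝ} (hc : ∀ i, hA.eigenvalues i ≤ c) :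
    RCLike.re (ρ * A).trace ≤ c * RCLike.re ρ.trace := by
  have h := RCLike.nonneg_iff.mp (hρ.trace_mul_nonneg_s18 (hA.posSemidef_smul_one_sub hc))
  rw [Matrix.mul_sub, Matrix.mul_smul, Matrix.mul_one, trace_sub, trace_smul] at h
  simpa [sub_nonneg] using h.1

lemma Matrix.IsHermitian.exists_re_trace_mul_eq_eigenvalue {A : Matrix ι ι 𝕜}
    (hA : A.IsHermitian) (i : ι) :
    ∃ ρ : Matrix ι ι 𝕜, ρ.PosSemidef ∧ ρ.trace = 1 ∧
      RCLike.re (ρ * A).trace = hA.eigenvalues i := by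
  set v : ι → 𝕜 := ⇑(hA.eigenvectorBasis i)
  refine ⟨vecMulVec v (star v), posSemidef_vecMulVec_self_star v, ?_, ?_⟩
  · rw [trace_vecMulVec, ← EuclideanSpace.inner_eq_star_dotProduct,
      inner_self_eq_norm_sq_to_K, hA.eigenvectorBasis.orthonormal.1 i]
    simp
  · rw [hA.eigenvalues_eq, vecMulVec_mul, trace_vecMulVec, dotProduct_comm, dotProduct_mulVec]

lemma IsDensity.re_trace_mul_le_iSup_eigenvalues {ρ A : Matrix ι ι ℂ} (hρ : IsDensity ρ)
    (hA : A.IsHermitian) : ((ρ * A).trace).re ≤ ⨆ i, hA.eigenvalues i := by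
  simpa [hρ.2] using hρ.1.re_trace_mul_le_s18 hA fun i => le_ciSup (Finite.bddAbove_range _) i

lemma Matrix.IsHermitian.exists_isDensity_re_trace_mul_eq_iSup [Nonempty ι] {A : Matrix ι ι ℂ}
    (hA : A.IsHermitian) : ∃ ρ, IsDensity ρ ∧ ((ρ * A).trace).re = ⨆ i, hA.eigenvalues i := by
  obtain ⟨i, hi⟩ := exists_eq_ciSup_of_finite (f := hA.eigenvalues)
  obtain ⟨ρ, hρ, htr, hρA⟩ := hA.exists_re_trace_mul_eq_eigenvalue i
  exact ⟨ρ, ⟨hρ, htr⟩, hρA.trans hi⟩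

end Spectral

lemma IsPOVM.sum_re_apply_self {ι : Type*} [DecidableEq ι] {m : ℕ} {τ : Fin m → Matrix ι ι ℂ}
    (hτ : IsPOVM τ) (i : ι) : ∑ z, (τ z i i).re = 1 := by
  simpa [← Complex.re_sum, ← Matrix.sum_apply] using congrArg (fun T => (T i i).re) hτ.2

def deterministicPOVM {Y : Type*} [DecidableEq Y] {q : ℕ} (f : Y → Fin q) :
    Fin q → Matrix Y Y ℂ :=
  fun z => diagonal fun y => if f y = z then 1 else 0

lemma isPOVM_deterministicPOVM {Y : Type*} [DecidableEq Y] {q : ℕ} (f : Y → Fin q) :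
    IsPOVM (deterministicPOVM f) := by
  refine ⟨fun z => PosSemidef.diagonal fun y => ?_, ?_⟩
  · split_ifs <;> simp
  · ext i j
    by_cases hij : i = j <;> simp [deterministicPOVM, Matrix.sum_apply, one_apply, hij]

lemma re_trace_mul_sum_smul {ι Y : Type*} [Fintype ι] [Fintype Y] (ρ : Matrix ι ι ℂ)
    (r : Y → ℝ) (π : Y → Matrix ι ι ℂ) :
    ((ρ * ∑ y, (r y : ℂ) • π y).trace).re = ∑ y, ((ρ * π y).trace).re * r y := by
  simp [Finset.mul_sum, trace_sum, Complex.re_sum, mul_comm]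

section QuantumClassical

variable {ι : Type*} [Fintype ι] [DecidableEq ι] {nn m q : ℕ} {π : Fin m → Matrix ι ι ℂ}
  {M : Matrix ι ι ℂ → Matrix (Fin m) (Fin m) ℂ}

lemma payoff_eq_of_quantumClassical
    (hM : ∀ ρ, M ρ = ∑ y, (ρ * π y).trace • single y y (1 : ℂ)) (g : Fin nn → Fin q → ℝ)
    (ρ : Fin nn → Matrix ι ι ℂ) {τ : Fin q → Matrix (Fin m) (Fin m) ℂ}
    (hτ : ∀ z, (τ z).IsHermitian) :
    payoff g M ρ τ = ∑ y, ∑ z, (τ z y y).re * ∑ x, ((ρ x * π y).trace).re * g x z := by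
  have htr : ∀ x z,
      ((M (ρ x) * τ z).trace).re = ∑ y, ((ρ x * π y).trace).re * (τ z y y).re := by
    intro x z
    simp_rw [hM, Finset.sum_mul, trace_sum, smul_mul_assoc, trace_smul, trace_single_mul,
      Complex.re_sum]
    refine Finset.sum_congr rfl fun y _ => ?_
    rw [← (hτ z).coe_re_apply_self y]
    simp
  simp_rw [payoff, htr, Finset.sum_mul, Finset.mul_sum]
  rw [Finset.sum_comm]
  refine ((Finset.sum_congr rfl fun z _ => Finset.sum_comm).trans Finset.sum_comm).trans ?_
  simp only [mul_left_comm, mul_comm]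

lemma payoff_deterministicPOVM
    (hM : ∀ ρ, M ρ = ∑ y, (ρ * π y).trace • single y y (1 : ℂ)) (g : Fin nn → Fin q → ℝ)
    (ρ : Fin nn → Matrix ι ι ℂ) (f : Fin m → Fin q) :
    payoff g M ρ (deterministicPOVM f) =
      ∑ x, ((ρ x * ∑ y, (g x (f y) : ℂ) • π y).trace).re := by
  rw [payoff_eq_of_quantumClassical hM g ρ fun z => ((isPOVM_deterministicPOVM f).1 z).isHermitian]
  simp_rw [re_trace_mul_sum_smul]
  simp only [deterministicPOVM, diagonal_apply_eq, apply_ite Complex.re, Complex.one_re,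
    Complex.zero_re, ite_mul, one_mul, zero_mul, Finset.sum_ite_eq, Finset.mem_univ, ↓reduceIte]
  exact Finset.sum_comm

lemma exists_payoff_le_payoff_deterministicPOVM [Nonempty (Fin q)]
    (hM : ∀ ρ, M ρ = ∑ y, (ρ * π y).trace • single y y (1 : ℂ)) (g : Fin nn → Fin q → ℝ)
    (ρ : Fin nn → Matrix ι ι ℂ) {τ : Fin q → Matrix (Fin m) (Fin m) ℂ} (hτ : IsPOVM τ) :
    ∃ f, payoff g M ρ τ ≤ payoff g M ρ (deterministicPOVM f) := by
  set c : Fin q → Fin m → ℝ := fun z y => ∑ x, ((ρ x * π y).trace).re * g x z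
  choose f hf using fun y => Finite.exists_max (c · y)
  refine ⟨f, ?_⟩
  rw [payoff_eq_of_quantumClassical hM g ρ fun z => (hτ.1 z).isHermitian,
    payoff_eq_of_quantumClassical hM g ρ fun z => ((isPOVM_deterministicPOVM f).1 z).isHermitian]
  refine Finset.sum_le_sum fun y _ => ?_
  calc ∑ z, (τ z y y).re * c z y ≤ ∑ z, (τ z y y).re * c (f y) y :=
        Finset.sum_le_sum fun z _ =>
          mul_le_mul_of_nonneg_left (hf y z) (RCLike.nonneg_iff.mp (hτ.1 z).diag_nonneg).1
    _ = c (f y) y := by rw [← Finset.sum_mul, hτ.sum_re_apply_self, one_mul]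
    _ = _ := by simp [deterministicPOVM, apply_ite Complex.re, c]

end QuantumClassical

theorem stmt18_general {dH nn m q : ℕ} (hdH : 0 < dH) (hq : 0 < q)
    (π : Fin m → Matrix (Fin dH) (Fin dH) ℂ)
    (M : Matrix (Fin dH) (Fin dH) ℂ → Matrix (Fin m) (Fin m) ℂ)
    (hM : ∀ ρ, M ρ = ∑ y, (ρ * π y).trace • Matrix.single y y (1 : ℂ))
    (g : Fin nn → Fin q → ℝ)
    (hA : ∀ (x : Fin nn) (f : Fin m → Fin q),
      (∑ y, ((g x (f y) : ℝ) : ℂ) • π y).IsHermitian) :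
    utility g M = ⨆ f : Fin m → Fin q, ∑ x, ⨆ i, (hA x f).eigenvalues i := by
  have : Nonempty (Fin dH) := Fin.pos_iff_nonempty.mp hdH
  have : Nonempty (Fin q) := Fin.pos_iff_nonempty.mp hq
  refine IsGreatest.csSup_eq ⟨?_, ?_⟩
  · obtain ⟨f, hf⟩ := exists_eq_ciSup_of_finite
      (f := fun f : Fin m → Fin q => ∑ x, ⨆ i, (hA x f).eigenvalues i)
    choose ρ hρ hρA using fun x => (hA x f).exists_isDensity_re_trace_mul_eq_iSup
    refine ⟨ρ, deterministicPOVM f, hρ, isPOVM_deterministicPOVM f, ?_⟩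
    rw [payoff_deterministicPOVM hM, ← hf]
    simp_rw [hρA]
  · rintro u ⟨ρ, τ, hρ, hτ, rfl⟩
    obtain ⟨f, hf⟩ := exists_payoff_le_payoff_deterministicPOVM hM g ρ hτ
    calc payoff g M ρ τ ≤ payoff g M ρ (deterministicPOVM f) := hf
      _ = ∑ x, ((ρ x * ∑ y, (g x (f y) : ℂ) • π y).trace).re := payoff_deterministicPOVM hM g ρ f
      _ ≤ ∑ x, ⨆ i, (hA x f).eigenvalues i := Finset.sum_le_sum fun x _ =>
          (hρ x).re_trace_mul_le_iSup_eigenvalues (hA x f)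
      _ ≤ ⨆ f, ∑ x, ⨆ i, (hA x f).eigenvalues i :=
          le_ciSup (f := fun f => ∑ x, ⨆ i, (hA x f).eigenvalues i) (Finite.bddAbove_range _) f

/-- utility of a quantum-classical channel. -/
theorem stmt18 {dH nn m q : ℕ} (hdH : 0 < dH) (hm : 0 < m) (hq : 0 < q)
    (π : Fin m → Matrix (Fin dH) (Fin dH) ℂ) (hπ : IsPOVM π)
    (M : Matrix (Fin dH) (Fin dH) ℂ → Matrix (Fin m) (Fin m) ℂ)
    (hM : ∀ ρ, M ρ = ∑ y, (ρ * π y).trace • Matrix.single y y (1 : ℂ))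
    (g : Fin nn → Fin q → ℝ)
    (hA : ∀ (x : Fin nn) (f : Fin m → Fin q),
      (∑ y, ((g x (f y) : ℝ) : ℂ) • π y).IsHermitian) :
    utility g M = ⨆ f : Fin m → Fin q, ∑ x, ⨆ i, (hA x f).eigenvalues i :=
  stmt18_general hdH hq π M hM g hA
end
end

section
/- Let H = R + C be Hermitian matrices of size d, where R has exactly one nonzero eigenvalue r ≤ 0 and C is positive semidefinite with eigenvalues c_0 ≥ c_1 ≥ … ≥ c_{d−1} ≥ 0. If the smallest eigenvalue of H is nonpositive, then ‖H‖_1 ≤ Σ_{i=0}^{d−2} c_i − r − c_{d−1} = Tr[C] − r − 2c_{d−1}. -/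
open Matrix Kronecker
open scoped ComplexOrder

noncomputable section

variable {n : Type*} [Fintype n] [DecidableEq n]

/-!
Every eigenvalue of `H = R + C` is at least `r + c_{d-1}`, since `r • 1 ≤ R` and
`c_{d-1} • 1 ≤ C` in the Loewner order. Moreover `R` vanishes on the hyperplane orthogonal to its
`r`-eigenvector, so the form of `H` is nonnegative there and `H` has at most one negative
eigenvalue. Hence `‖H‖₁ = Tr H - 2 min(h_min, 0) ≤ (Tr C + r) - 2 (r + c_{d-1})`.
-/

namespace Matrix.IsHermitian

variable {𝕜 : Type*} [RCLike 𝕜] {A B : Matrix n n 𝕜}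

lemma trace_cfc (hA : A.IsHermitian) (f : ℝ → ℝ) :
    (cfc f A).trace = ∑ i, (f (hA.eigenvalues i) : 𝕜) := by
  rw [hA.cfc_eq, IsHermitian.cfc, Unitary.conjStarAlgAut_apply, trace_mul_cycle,
    Unitary.coe_star_mul_self, one_mul, trace_diagonal]
  rfl

open scoped MatrixOrder in
lemma algebraMap_le_iff_le_eigenvalues (hA : A.IsHermitian) {t : ℝ} :
    algebraMap ℝ (Matrix n n 𝕜) t ≤ A ↔ ∀ i, t ≤ hA.eigenvalues i := by
  rw [algebraMap_le_iff_le_spectrum hA.isSelfAdjoint, hA.spectrum_real_eq_range_eigenvalues,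
    Set.forall_mem_range]

open scoped MatrixOrder in
lemma le_eigenvalues_add (hA : A.IsHermitian) (hB : B.IsHermitian) {a b : ℝ}
    (ha : ∀ i, a ≤ hA.eigenvalues i) (hb : ∀ i, b ≤ hB.eigenvalues i) (i : n) :
    a + b ≤ (hA.add hB).eigenvalues i := by
  have h := add_le_add (hA.algebraMap_le_iff_le_eigenvalues.mpr ha)
    (hB.algebraMap_le_iff_le_eigenvalues.mpr hb)
  rw [← map_add] at h
  exact (hA.add hB).algebraMap_le_iff_le_eigenvalues.mp h i

lemma mulVec_eq_zero_of_dotProduct_eigenvectorBasis_eq_zero (hA : A.IsHermitian) {x : n → 𝕜}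
    (hx : ∀ k, hA.eigenvalues k ≠ 0 → star ⇑(hA.eigenvectorBasis k) ⬝ᵥ x = 0) :
    A *ᵥ x = 0 := by
  rw [hA.spectral_theorem, Unitary.conjStarAlgAut_apply, ← mulVec_mulVec, ← mulVec_mulVec]
  suffices h : diagonal (RCLike.ofReal ∘ hA.eigenvalues) *ᵥ
      ((star hA.eigenvectorUnitary : Matrix n n 𝕜) *ᵥ x) = 0 by
    rw [h, mulVec_zero]
  ext k
  by_cases hk : hA.eigenvalues k = 0
  · simp [mulVec_diagonal, hk]
  · rw [mulVec_diagonal, Pi.zero_apply, mul_eq_zero]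
    right
    simpa [mulVec, dotProduct, star_apply] using hx k hk

lemma re_dotProduct_mulVec_eigenvector_combination (hA : A.IsHermitian) {i j : n} (hij : i ≠ j)
    (a c : 𝕜) :
    RCLike.re (star (a • ⇑(hA.eigenvectorBasis i) + c • ⇑(hA.eigenvectorBasis j)) ⬝ᵥ
      (A *ᵥ (a • ⇑(hA.eigenvectorBasis i) + c • ⇑(hA.eigenvectorBasis j)))) =
      ‖a‖ ^ 2 * hA.eigenvalues i + ‖c‖ ^ 2 * hA.eigenvalues j := by
  have hb (k l : n) : star ⇑(hA.eigenvectorBasis k) ⬝ᵥ ⇑(hA.eigenvectorBasis l) =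
      if k = l then 1 else 0 := by
    rw [dotProduct_comm, ← EuclideanSpace.inner_eq_star_dotProduct]
    exact orthonormal_iff_ite.mp hA.eigenvectorBasis.orthonormal k l
  simp only [mulVec_add, mulVec_smul, mulVec_eigenvectorBasis, star_add, star_smul,
    add_dotProduct, dotProduct_add, smul_dotProduct, dotProduct_smul, hb,
    if_neg hij, if_neg hij.symm]
  simp only [if_true, smul_eq_mul, mul_one, mul_zero, add_zero, zero_add,
    RCLike.real_smul_eq_coe_mul, RCLike.star_def, mul_left_comm a, mul_left_comm c,
    RCLike.mul_conj]
  norm_cast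
  ring

/-- The hyperplane `u⊥` meets the span of any two eigenvectors. -/
lemma eigenvalues_nonneg_of_ne_of_eigenvalues_neg (hA : A.IsHermitian) (u : n → 𝕜)
    (hu : ∀ x, star u ⬝ᵥ x = 0 → 0 ≤ RCLike.re (star x ⬝ᵥ (A *ᵥ x)))
    {i j : n} (hij : i ≠ j) (hi : hA.eigenvalues i < 0) : 0 ≤ hA.eigenvalues j := by
  by_contra! hj
  set α := star u ⬝ᵥ ⇑(hA.eigenvectorBasis i)
  set β := star u ⬝ᵥ ⇑(hA.eigenvectorBasis j)
  by_cases hα : α = 0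
  · have h := hu ((1 : 𝕜) • ⇑(hA.eigenvectorBasis i) + (0 : 𝕜) • ⇑(hA.eigenvectorBasis j))
      (by simpa using hα)
    rw [hA.re_dotProduct_mulVec_eigenvector_combination hij] at h
    norm_num at h
    linarith
  · have h := hu (β • ⇑(hA.eigenvectorBasis i) + (-α) • ⇑(hA.eigenvectorBasis j))
      (by simp only [dotProduct_add, dotProduct_smul, smul_eq_mul]; ring)
    rw [hA.re_dotProduct_mulVec_eigenvector_combination hij, norm_neg] at h
    have hβi := mul_nonpos_of_nonneg_of_nonpos (sq_nonneg ‖β‖) hi.le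
    have hαj := mul_neg_of_pos_of_neg (pow_pos (norm_pos_iff.mpr hα) 2) hj
    linarith

end Matrix.IsHermitian

open scoped MatrixOrder in
lemma traceNorm_eq_sum_abs_eigenvalues {A : Matrix n n ℂ} (hA : A.IsHermitian) :
    traceNorm A = ∑ i, |hA.eigenvalues i| := by
  have hAA := posSemidef_conjTranspose_mul_self A
  have key : CFC.abs A = cfc Real.sqrt (Aᴴ * A) := by
    rw [CFC.abs, star_eq_conjTranspose, CFC.sqrt_eq_real_sqrt _ hAA.nonneg, cfcₙ_eq_cfc]
  have h := congrArg (fun M => (trace M).re) key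
  simp only [CFC.abs_eq_cfc_norm A hA.isSelfAdjoint, hA.trace_cfc, hAA.1.trace_cfc] at h
  simpa [traceNorm] using h.symm

lemma sum_abs_le_sum_sub_two_mul {ι : Type*} [Fintype ι] {h : ι → ℝ} {m : ℝ} (hm : m ≤ 0)
    (hle : ∀ i, m ≤ h i) (hneg : ∀ i j, i ≠ j → h i < 0 → 0 ≤ h j) :
    ∑ i, |h i| ≤ ∑ i, h i - 2 * m := by
  by_cases hex : ∃ j, h j < 0
  · obtain ⟨j, hj⟩ := hex
    have hsum : ∑ i, (|h i| - h i) = |h j| - h j :=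
      Finset.sum_eq_single j
        (fun i _ hij ↦ by rw [abs_of_nonneg (hneg j i hij.symm hj), sub_self]) (by simp)
    rw [Finset.sum_sub_distrib, abs_of_neg hj] at hsum
    linarith [hle j]
  · simp only [not_exists, not_lt] at hex
    rw [Finset.sum_congr rfl fun i _ ↦ abs_of_nonneg (hex i)]
    linarith

theorem stmt19_general {d : ℕ} (R C : Matrix (Fin d) (Fin d) ℂ)
    (hR : R.IsHermitian) (hC : C.PosSemidef)
    (r : ℝ) (hr : r ≤ 0) (i₀ : Fin d)
    (hRr : hR.eigenvalues i₀ = r) (hR0 : ∀ i, i ≠ i₀ → hR.eigenvalues i = 0)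
    (cmin : ℝ) (hc1 : ∀ i, cmin ≤ hC.1.eigenvalues i)
    (hH : ∃ i, (hR.add hC.1).eigenvalues i ≤ 0) :
    traceNorm (R + C) ≤ (C.trace).re - r - 2 * cmin := by
  have hr_le : ∀ i, r ≤ hR.eigenvalues i := fun i ↦ by
    by_cases hi : i = i₀
    · rw [hi, hRr]
    · rw [hR0 i hi]; exact hr
  have hle := hR.le_eigenvalues_add hC.1 hr_le hc1
  obtain ⟨i, hi⟩ := hH
  have hform : ∀ x, star ⇑(hR.eigenvectorBasis i₀) ⬝ᵥ x = 0 →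
      0 ≤ RCLike.re (star x ⬝ᵥ ((R + C) *ᵥ x)) := fun x hx ↦ by
    have hRx : R *ᵥ x = 0 := hR.mulVec_eq_zero_of_dotProduct_eigenvectorBasis_eq_zero
      fun k hk ↦ by rwa [not_not.mp (mt (hR0 k) hk)]
    simpa [add_mulVec, hRx] using hC.re_dotProduct_nonneg x
  have hneg : ∀ i j, i ≠ j → (hR.add hC.1).eigenvalues i < 0 → 0 ≤ (hR.add hC.1).eigenvalues j :=
    fun _ _ ↦ (hR.add hC.1).eigenvalues_nonneg_of_ne_of_eigenvalues_neg _ hform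
  have htrR : R.trace = r := by
    rw [hR.trace_eq_sum_eigenvalues, Finset.sum_eq_single i₀ (fun k _ hk ↦ by simp [hR0 k hk])
      (by simp)]
    simp [hRr]
  have htr : ∑ i, (hR.add hC.1).eigenvalues i = r + (C.trace).re := by
    have h := congrArg Complex.re (hR.add hC.1).trace_eq_sum_eigenvalues
    rw [trace_add, htrR] at h
    simpa using h.symm
  rw [traceNorm_eq_sum_abs_eigenvalues (hR.add hC.1)]
  linarith [sum_abs_le_sum_sub_two_mul ((hle i).trans hi) hle hneg]

/-- Weyl-type bound on the trace norm of `R + C`. -/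
theorem stmt19 {d : ℕ} (R C : Matrix (Fin d) (Fin d) ℂ)
    (hR : R.IsHermitian) (hC : C.PosSemidef)
    (r : ℝ) (hr : r ≤ 0) (i₀ : Fin d)
    (hRr : hR.eigenvalues i₀ = r) (hR0 : ∀ i, i ≠ i₀ → hR.eigenvalues i = 0)
    (cmin : ℝ) (hc1 : ∀ i, cmin ≤ hC.1.eigenvalues i) (hc2 : ∃ i, hC.1.eigenvalues i = cmin)
    (hH : ∃ i, (hR.add hC.1).eigenvalues i ≤ 0) :
    traceNorm (R + C) ≤ (C.trace).re - r - 2 * cmin :=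
  stmt19_general R C hR hC r hr i₀ hRr hR0 cmin hc1 hH
end
end
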